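/- arXiv:math/0110031 — 7 statements merged into one kernel-verified Lean document; each statement's English description precedes it below -/
import Mathlib

section
/- Let (a_k)_{k≥0} and (λ_k)_{k≥1} be sequences in a commutative ring, and define μ_n as the sum over all Motzkin paths π of length n of the product of step weights, where a rising step from level y has weight 1, a horizontal step at level y has weight a_y, and a falling step from level y has weight λ_y. Then for every N, the formal power series Σ μ_n z^n agrees modulo z^{N+1} with the finite continued fraction 1/(1 − a_0 z − λ_1 z²/(1 − a_1 z − λ_2 z²/(⋯/(1 − a_N z)))). -/
open PowerSeries

/-- Motzkin paths of length `n` as height sequences with values in `Fin (n+1)`. -/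
def motzkinSet (n : ℕ) : Finset (Fin (n + 1) → Fin (n + 1)) :=
  Finset.univ.filter (fun f => f 0 = 0 ∧ f (Fin.last n) = 0 ∧
    ∀ i : Fin n, (f i.succ : ℕ) ≤ (f i.castSucc : ℕ) + 1 ∧
      (f i.castSucc : ℕ) ≤ (f i.succ : ℕ) + 1)

/-- Flajolet's valuation of a Motzkin path: a rising step has weight `1`,
a horizontal step at level `y` has weight `a y`, and a falling step from level `y`
has weight `l y`. -/
def motzkinVal {R : Type*} [CommRing R] (a l : ℕ → R) {n : ℕ}
    (f : Fin (n + 1) → Fin (n + 1)) : R :=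
  ∏ i : Fin n,
    if (f i.succ : ℕ) = (f i.castSucc : ℕ) + 1 then 1
    else if (f i.succ : ℕ) = (f i.castSucc : ℕ) then a (f i.castSucc)
    else l (f i.castSucc)

/-- The finite continued fraction of depth `d` starting at level `j`:
`cf d j = 1/(1 - a_j z - λ_{j+1} z² · cf (d-1) (j+1))`, with `cf 0 j = 1/(1 - a_j z)`.
The inverse is the power series inverse `invOfUnit`, legitimate since the
constant coefficient is `1`. -/
noncomputable def contFrac {R : Type*} [CommRing R] (a l : ℕ → R) : ℕ → ℕ → PowerSeries R
  | 0, j => invOfUnit (1 - C (a j) * X) 1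
  | d + 1, j => invOfUnit
      (1 - C (a j) * X - C (l (j + 1)) * X ^ 2 * contFrac a l d (j + 1)) 1

section Aux

variable {R : Type*} [CommRing R] (a l : ℕ → R)

/-- Paths of length `n` from level `0` to level `k`. -/
def pathSet (n k : ℕ) : Finset (Fin (n + 1) → Fin (n + 1)) :=
  Finset.univ.filter (fun f => f 0 = 0 ∧ (f (Fin.last n) : ℕ) = k ∧
    ∀ i : Fin n, (f i.succ : ℕ) ≤ (f i.castSucc : ℕ) + 1 ∧
      (f i.castSucc : ℕ) ≤ (f i.succ : ℕ) + 1)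

noncomputable def SS (n k : ℕ) : R := ∑ f ∈ pathSet n k, motzkinVal a l f

lemma fcongr {m : ℕ} (f : Fin m → Fin m) {x y : Fin m} (h : (x : ℕ) = (y : ℕ)) : f x = f y :=
  congrArg f (Fin.ext h)

lemma mem_pathSet_le {n k : ℕ} {f : Fin (n + 1) → Fin (n + 1)} (hf : f ∈ pathSet n k) :
    ∀ i : Fin (n + 1), (f i : ℕ) ≤ i := by
  simp only [pathSet, Finset.mem_filter, Finset.mem_univ, true_and] at hf
  obtain ⟨h0, _, hs⟩ := hf
  intro i
  induction i using Fin.induction with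
  | zero => simp [h0]
  | succ i ih =>
    have h1 := (hs i).1
    have h2 : (i.castSucc : ℕ) = (i : ℕ) := rfl
    have h3 : (i.succ : ℕ) = (i : ℕ) + 1 := rfl
    omega

lemma SS_eq_zero {n k : ℕ} (h : n < k) : SS a l n k = 0 := by
  have : pathSet n k = (∅ : Finset (Fin (n + 1) → Fin (n + 1))) := by
    refine Finset.eq_empty_of_forall_notMem fun f hf => ?_
    have h1 := mem_pathSet_le hf (Fin.last n)
    simp only [pathSet, Finset.mem_filter, Finset.mem_univ, true_and] at hf
    have := hf.2.1
    have h2 : ((Fin.last n : Fin (n+1)) : ℕ) = n := rfl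
    omega
  simp [SS, this]

lemma SS_zero (k : ℕ) : SS a l 0 k = if k = 0 then 1 else 0 := by
  rcases k with _ | k
  · simp only [if_pos rfl, SS]
    have h1 : pathSet 0 0 = Finset.univ := by
      refine Finset.eq_univ_of_forall fun f => ?_
      simp only [pathSet, Finset.mem_filter, Finset.mem_univ, true_and]
      have hz : ∀ x : Fin (0 + 1), x = 0 := fun x => Fin.ext (by omega)
      refine ⟨hz _, ?_, fun i => i.elim0⟩
      rw [hz (f (Fin.last 0))]
      rfl
    rw [h1]
    have h2 : ∀ f : Fin 1 → Fin 1, motzkinVal a l f = 1 := fun f => by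
      simp [motzkinVal]
    simp [h2, Finset.card_univ]
  · rw [if_neg (Nat.succ_ne_zero k)]
    exact SS_eq_zero a l (Nat.succ_pos k)

def dmap (n : ℕ) (f : Fin (n + 2) → Fin (n + 2)) : Fin (n + 1) → Fin (n + 1) :=
  fun i => ⟨min (f i.castSucc : ℕ) n, by omega⟩

def umap (n k : ℕ) (hk : k < n + 2) (g : Fin (n + 1) → Fin (n + 1)) :
    Fin (n + 2) → Fin (n + 2) :=
  fun i => if h : (i : ℕ) < n + 1 then (g ⟨i, h⟩).castSucc else ⟨k, hk⟩

lemma SS_succ (n k : ℕ) :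
    SS a l (n + 1) k =
      (if k = 0 then 0 else SS a l n (k - 1)) + a k * SS a l n k
        + l (k + 1) * SS a l n (k + 1) := by
  classical
  have hfib := (Finset.sum_fiberwise (pathSet (n + 1) k)
    (fun f => f ((Fin.last n).castSucc)) (motzkinVal a l)).symm
  have key : ∀ j : Fin (n + 2),
      (∑ f ∈ (pathSet (n + 1) k).filter (fun f => f ((Fin.last n).castSucc) = j),
          motzkinVal a l f)
        = (if k = (j : ℕ) + 1 then 1 else if k = (j : ℕ) then a (j : ℕ)
            else if (j : ℕ) = k + 1 then l (j : ℕ) else 0) * SS a l n (j : ℕ) := by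
    intro j
    by_cases hjn : (j : ℕ) ≤ n
    · by_cases hstep : k = (j : ℕ) + 1 ∨ k = (j : ℕ) ∨ (j : ℕ) = k + 1
      · have hk2 : k < n + 2 := by omega
        have hwj : (j : ℕ) < n + 1 := by omega
        rw [SS, Finset.mul_sum]
        refine Finset.sum_nbij' (dmap n) (umap n k hk2) ?_ ?_ ?_ ?_ ?_
        · -- dmap maps into pathSet n j
          intro f hf
          rw [Finset.mem_filter] at hf
          obtain ⟨hfp, hfj⟩ := hf
          have hle := mem_pathSet_le hfp
          simp only [pathSet, Finset.mem_filter, Finset.mem_univ, true_and] at hfp ⊢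
          obtain ⟨h0, hlast, hs⟩ := hfp
          have hfjv : (f ((Fin.last n).castSucc) : ℕ) = (j : ℕ) := by rw [hfj]
          refine ⟨?_, ?_, ?_⟩
          · apply Fin.ext
            show min (f ((0 : Fin (n + 1)).castSucc) : ℕ) n = ((0 : Fin (n + 1)) : ℕ)
            have e : f ((0 : Fin (n + 1)).castSucc) = f 0 := fcongr f rfl
            rw [e, h0]
            simp
          · show min (f ((Fin.last n).castSucc) : ℕ) n = (j : ℕ)
            rw [hfjv]
            omega
          · intro i
            have e : (f i.succ.castSucc : ℕ) = (f i.castSucc.succ : ℕ) :=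
              congrArg Fin.val (fcongr f rfl)
            have hsi := hs i.castSucc
            have hb1 := hle i.succ.castSucc
            have hb2 := hle i.castSucc.castSucc
            have hv1 : ((i.succ.castSucc : Fin (n + 2)) : ℕ) = (i : ℕ) + 1 := rfl
            have hv2 : ((i.castSucc.castSucc : Fin (n + 2)) : ℕ) = (i : ℕ) := rfl
            have hilt : (i : ℕ) < n := i.isLt
            show min (f i.succ.castSucc : ℕ) n ≤ min (f i.castSucc.castSucc : ℕ) n + 1 ∧
              min (f i.castSucc.castSucc : ℕ) n ≤ min (f i.succ.castSucc : ℕ) n + 1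
            omega
        · -- umap maps into the filter
          intro g hg
          have hgle := mem_pathSet_le hg
          simp only [pathSet, Finset.mem_filter, Finset.mem_univ, true_and] at hg
          obtain ⟨h0, hlast, hs⟩ := hg
          rw [Finset.mem_filter]
          have hup : ∀ (i : Fin (n + 2)) (h : (i : ℕ) < n + 1),
              umap n k hk2 g i = (g ⟨i, h⟩).castSucc := fun i h => dif_pos h
          have hupl : ∀ (i : Fin (n + 2)), ¬ ((i : ℕ) < n + 1) →
              umap n k hk2 g i = ⟨k, hk2⟩ := fun i h => dif_neg h
          refine ⟨?_, ?_⟩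
          case _ =>
           simp only [pathSet, Finset.mem_filter, Finset.mem_univ, true_and]
           refine ⟨?_, ?_, ?_⟩
           · rw [hup 0 (by simp only [Fin.val_succ, Fin.coe_castSucc, Fin.val_zero, Fin.val_last]; omega)]
             apply Fin.ext
             show ((g ⟨0, by omega⟩).castSucc : ℕ) = 0
             have e : (⟨0, by omega⟩ : Fin (n + 1)) = 0 := Fin.ext rfl
             rw [e, h0]
             rfl
           · rw [hupl (Fin.last (n + 1)) (by simp only [Fin.val_succ, Fin.coe_castSucc, Fin.val_zero, Fin.val_last]; omega)]
           · intro i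
             by_cases hi : (i : ℕ) < n
             · rw [hup i.succ (by simp only [Fin.val_succ, Fin.coe_castSucc, Fin.val_zero, Fin.val_last]; omega), hup i.castSucc (by simp only [Fin.val_succ, Fin.coe_castSucc, Fin.val_zero, Fin.val_last]; omega)]
               have e1 : (⟨((i.succ : Fin (n + 2)) : ℕ), by simp only [Fin.val_succ, Fin.coe_castSucc, Fin.val_zero, Fin.val_last]; omega⟩ : Fin (n + 1))
                   = (⟨(i : ℕ), hi⟩ : Fin n).succ := Fin.ext rfl
               have e2 : (⟨((i.castSucc : Fin (n + 2)) : ℕ), by simp only [Fin.val_succ, Fin.coe_castSucc, Fin.val_zero, Fin.val_last]; omega⟩ : Fin (n + 1))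
                   = (⟨(i : ℕ), hi⟩ : Fin n).castSucc := Fin.ext rfl
               rw [e1, e2]
               have := hs ⟨(i : ℕ), hi⟩
               simpa using this
             · have hiv : (i : ℕ) = n := by have := i.isLt; omega
               rw [hup i.castSucc (by simp only [Fin.val_succ, Fin.coe_castSucc, Fin.val_zero, Fin.val_last]; omega), hupl i.succ (by simp only [Fin.val_succ, Fin.coe_castSucc, Fin.val_zero, Fin.val_last]; omega)]
               have e : (⟨((i.castSucc : Fin (n + 2)) : ℕ), by simp only [Fin.val_succ, Fin.coe_castSucc, Fin.val_zero, Fin.val_last]; omega⟩ : Fin (n + 1))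
                   = Fin.last n := Fin.ext (by simp only [Fin.coe_castSucc, Fin.val_last]; omega)
               rw [e]
               have hv : ((g (Fin.last n)).castSucc : ℕ) = (j : ℕ) := hlast
               constructor
               · show k ≤ ((g (Fin.last n)).castSucc : ℕ) + 1
                 omega
               · show ((g (Fin.last n)).castSucc : ℕ) ≤ k + 1
                 omega
          case _ =>
           show umap n k hk2 g ((Fin.last n).castSucc) = j
           rw [hup ((Fin.last n).castSucc) (by simp only [Fin.val_succ, Fin.coe_castSucc, Fin.val_zero, Fin.val_last]; omega)]
           apply Fin.ext
           have e : (⟨(((Fin.last n).castSucc : Fin (n + 2)) : ℕ), by simp only [Fin.val_succ, Fin.coe_castSucc, Fin.val_zero, Fin.val_last]; omega⟩ :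
               Fin (n + 1)) = Fin.last n := Fin.ext rfl
           rw [e]
           exact hlast
        · -- left inverse
          intro f hf
          rw [Finset.mem_filter] at hf
          have hle := mem_pathSet_le hf.1
          have hlast : (f (Fin.last (n + 1)) : ℕ) = k := by
            have := hf.1
            simp only [pathSet, Finset.mem_filter, Finset.mem_univ, true_and] at this
            exact this.2.1
          funext i
          by_cases h : (i : ℕ) < n + 1
          · apply Fin.ext
            rw [show umap n k hk2 (dmap n f) i = ((dmap n f) ⟨i, h⟩).castSucc from dif_pos h]
            show ((dmap n f) ⟨(i : ℕ), h⟩ : ℕ) = (f i : ℕ)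
            show min (f (Fin.castSucc ⟨(i : ℕ), h⟩) : ℕ) n = (f i : ℕ)
            have e : f (Fin.castSucc ⟨(i : ℕ), h⟩) = f i := fcongr f rfl
            rw [e]
            have := hle i
            omega
          · apply Fin.ext
            rw [show umap n k hk2 (dmap n f) i = ⟨k, hk2⟩ from dif_neg h]
            have hiv : (i : ℕ) = n + 1 := by have := i.isLt; omega
            have e : f i = f (Fin.last (n + 1)) := fcongr f (by simp [Fin.last, hiv])
            show k = (f i : ℕ)
            rw [e, hlast]
        · -- right inverse
          intro g hg
          have hgle := mem_pathSet_le hg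
          funext i
          apply Fin.ext
          show min ((umap n k hk2 g) i.castSucc : ℕ) n = (g i : ℕ)
          have h : ((i.castSucc : Fin (n + 2)) : ℕ) < n + 1 := by simp only [Fin.val_succ, Fin.coe_castSucc, Fin.val_zero, Fin.val_last]; omega
          rw [show umap n k hk2 g i.castSucc = (g ⟨(i.castSucc : ℕ), h⟩).castSucc from dif_pos h]
          have e : (⟨((i.castSucc : Fin (n + 2)) : ℕ), h⟩ : Fin (n + 1)) = i := Fin.ext rfl
          rw [e]
          have := hgle i
          have hcv : ((g i).castSucc : ℕ) = (g i : ℕ) := rfl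
          omega
        · -- values
          intro f hf
          rw [Finset.mem_filter] at hf
          obtain ⟨hfp, hfj⟩ := hf
          have hle := mem_pathSet_le hfp
          have hlast : (f (Fin.last (n + 1)) : ℕ) = k := by
            have := hfp
            simp only [pathSet, Finset.mem_filter, Finset.mem_univ, true_and] at this
            exact this.2.1
          have hfjv : (f ((Fin.last n).castSucc) : ℕ) = (j : ℕ) := by rw [hfj]
          rw [motzkinVal, Fin.prod_univ_castSucc]
          have hsuccv : (f ((Fin.last n).succ) : ℕ) = k := by
            have e : f ((Fin.last n).succ) = f (Fin.last (n + 1)) := fcongr f rfl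
            rw [e, hlast]
          have hwlast : (if (f (Fin.last n).succ : ℕ) = (f (Fin.last n).castSucc : ℕ) + 1
                then (1 : R)
              else if (f (Fin.last n).succ : ℕ) = (f (Fin.last n).castSucc : ℕ) then
                a (f (Fin.last n).castSucc : ℕ)
              else l (f (Fin.last n).castSucc : ℕ))
              = (if k = (j : ℕ) + 1 then 1 else if k = (j : ℕ) then a (j : ℕ)
                  else if (j : ℕ) = k + 1 then l (j : ℕ) else 0) := by
            rw [hsuccv, hfjv]
            rcases hstep with h | h | h
            · simp [h]
            · have c1 : ¬ (k = (j : ℕ) + 1) := by omega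
              simp [c1, h]
            · have c1 : ¬ (k = (j : ℕ) + 1) := by omega
              have c2 : ¬ (k = (j : ℕ)) := by omega
              simp [c1, c2, h]
          have hprod : (∏ i : Fin n,
              if (f i.castSucc.succ : ℕ) = (f i.castSucc.castSucc : ℕ) + 1 then (1 : R)
              else if (f i.castSucc.succ : ℕ) = (f i.castSucc.castSucc : ℕ) then
                a (f i.castSucc.castSucc : ℕ)
              else l (f i.castSucc.castSucc : ℕ))
              = motzkinVal a l (dmap n f) := by
            rw [motzkinVal]
            refine Finset.prod_congr rfl fun i _ => ?_
            have hilt : (i : ℕ) < n := i.isLt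
            have e1 : ((dmap n f) i.succ : ℕ) = (f i.castSucc.succ : ℕ) := by
              show min (f i.succ.castSucc : ℕ) n = _
              have e : (f i.succ.castSucc : ℕ) = (f i.castSucc.succ : ℕ) :=
                congrArg Fin.val (fcongr f rfl)
              have hb := hle i.succ.castSucc
              have hv : ((i.succ.castSucc : Fin (n + 2)) : ℕ) = (i : ℕ) + 1 := rfl
              omega
            have e2 : ((dmap n f) i.castSucc : ℕ) = (f i.castSucc.castSucc : ℕ) := by
              show min (f i.castSucc.castSucc : ℕ) n = _
              have hb := hle i.castSucc.castSucc
              have hv : ((i.castSucc.castSucc : Fin (n + 2)) : ℕ) = (i : ℕ) := rfl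
              omega
            rw [e1, e2]
          rw [hprod, hwlast]
          ring
      · have hempty : (pathSet (n + 1) k).filter
            (fun f => f ((Fin.last n).castSucc) = j) = ∅ := by
          refine Finset.eq_empty_of_forall_notMem fun f hf => ?_
          rw [Finset.mem_filter] at hf
          obtain ⟨hf1, hf2⟩ := hf
          have hlast : (f (Fin.last (n + 1)) : ℕ) = k := by
            have := hf1
            simp only [pathSet, Finset.mem_filter, Finset.mem_univ, true_and] at this
            exact this.2.1
          have hsteps : ∀ i : Fin (n + 1), (f i.succ : ℕ) ≤ (f i.castSucc : ℕ) + 1 ∧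
              (f i.castSucc : ℕ) ≤ (f i.succ : ℕ) + 1 := by
            have := hf1
            simp only [pathSet, Finset.mem_filter, Finset.mem_univ, true_and] at this
            exact this.2.2
          have h1 := hsteps (Fin.last n)
          have e1 : f ((Fin.last n).succ) = f (Fin.last (n + 1)) :=
            fcongr f rfl
          rw [e1, hf2] at h1
          omega
        rw [hempty]
        have c1 : ¬ (k = (j : ℕ) + 1) := by omega
        have c2 : ¬ (k = (j : ℕ)) := by omega
        have c3 : ¬ ((j : ℕ) = k + 1) := by omega
        simp [c1, c2, c3]
    · have hj : (j : ℕ) = n + 1 := by omega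
      have hempty : (pathSet (n + 1) k).filter
          (fun f => f ((Fin.last n).castSucc) = j) = ∅ := by
        refine Finset.eq_empty_of_forall_notMem fun f hf => ?_
        rw [Finset.mem_filter] at hf
        have h1 := mem_pathSet_le hf.1 ((Fin.last n).castSucc)
        have h2 : (((Fin.last n).castSucc : Fin (n + 2)) : ℕ) = n := rfl
        rw [hf.2] at h1
        omega
      rw [hempty, SS_eq_zero a l (by omega), mul_zero]
      simp
  rw [SS, hfib]
  simp only [key]
  rw [Fin.sum_univ_eq_sum_range (fun j =>
    (if k = j + 1 then (1 : R) else if k = j then a j else if j = k + 1 then l j else 0)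
      * SS a l n j) (n + 2)]
  rcases k with _ | k'
  · have hpt : ∀ j ∈ Finset.range (n + 2),
        (if 0 = j + 1 then (1 : R) else if 0 = j then a j else if j = 0 + 1 then l j else 0)
          * SS a l n j
        = ((if j = 0 then a 0 * SS a l n j else 0) + (if j = 1 then l 1 * SS a l n j else 0)) := by
      intro j _
      by_cases h0 : j = 0
      · subst h0; simp
      · by_cases h1 : j = 1
        · subst h1; simp
        · have c1 : ¬ (0 = j + 1) := by omega
          have c2 : ¬ (0 = j) := by omega
          simp [c1, c2, h0, h1]
    rw [Finset.sum_congr rfl hpt, Finset.sum_add_distrib,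
      Finset.sum_ite_eq' (Finset.range (n + 2)) 0, Finset.sum_ite_eq' (Finset.range (n + 2)) 1]
    simp [Finset.mem_range]
  · have hpt : ∀ j ∈ Finset.range (n + 2),
        (if k' + 1 = j + 1 then (1 : R) else if k' + 1 = j then a j
            else if j = (k' + 1) + 1 then l j else 0) * SS a l n j
        = (((if j = k' then SS a l n j else 0)
            + (if j = k' + 1 then a (k' + 1) * SS a l n j else 0))
            + (if j = k' + 2 then l (k' + 2) * SS a l n j else 0)) := by
      intro j _
      by_cases h0 : j = k'
      · subst h0; simp
      · by_cases h1 : j = k' + 1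
        · subst h1; simp
        · by_cases h2 : j = k' + 2
          · subst h2
            have c1 : ¬ (k' + 1 = k' + 2 + 1) := by omega
            have c2 : ¬ (k' + 1 = k' + 2) := by omega
            simp [c1, c2]
          · have c1 : ¬ (k' + 1 = j + 1) := by omega
            have c2 : ¬ (k' + 1 = j) := by omega
            have c3 : ¬ (j = k' + 1 + 1) := by omega
            simp [c1, c2, c3, h0, h1, Ne.symm h0]
    rw [Finset.sum_congr rfl hpt, Finset.sum_add_distrib, Finset.sum_add_distrib,
      Finset.sum_ite_eq' (Finset.range (n + 2)) k', Finset.sum_ite_eq' (Finset.range (n + 2)) (k' + 1),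
      Finset.sum_ite_eq' (Finset.range (n + 2)) (k' + 2)]
    have e1 : (if k' ∈ Finset.range (n + 2) then SS a l n k' else 0) = SS a l n k' := by
      split_ifs with h; · rfl
      · exact (SS_eq_zero a l (by simp [Finset.mem_range] at h; omega)).symm
    have e2 : (if k' + 1 ∈ Finset.range (n + 2) then a (k' + 1) * SS a l n (k' + 1) else 0)
        = a (k' + 1) * SS a l n (k' + 1) := by
      split_ifs with h; · rfl
      · rw [SS_eq_zero a l (by simp [Finset.mem_range] at h; omega), mul_zero]
    have e3 : (if k' + 2 ∈ Finset.range (n + 2) then l (k' + 2) * SS a l n (k' + 2) else 0)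
        = l (k' + 2) * SS a l n (k' + 2) := by
      split_ifs with h; · rfl
      · rw [SS_eq_zero a l (by simp [Finset.mem_range] at h; omega), mul_zero]
    rw [e1, e2, e3]
    simp

noncomputable def PP (k : ℕ) : PowerSeries R := PowerSeries.mk fun n => SS a l n k

lemma X_pow_dvd_PP (k : ℕ) : (X : PowerSeries R) ^ k ∣ PP a l k := by
  rw [X_pow_dvd_iff]
  intro m hm
  simp [PP, SS_eq_zero a l hm]

lemma PP_zero_eq : PP a l 0 = 1 + X * (C (a 0) * PP a l 0 + C (l 1) * PP a l 1) := by
  ext n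
  rcases n with _ | n
  · simp [PP, SS_zero]
  · have h := SS_succ a l n 0
    simp only [if_pos rfl, zero_add] at h
    simp [PP, map_add, PowerSeries.coeff_succ_X_mul, coeff_C_mul, h]

lemma PP_succ_eq (k : ℕ) : PP a l (k + 1) =
    X * (PP a l k + C (a (k + 1)) * PP a l (k + 1) + C (l (k + 2)) * PP a l (k + 2)) := by
  ext n
  rcases n with _ | n
  · simp [PP, SS_zero]
  · have h := SS_succ a l n (k + 1)
    rw [if_neg (Nat.succ_ne_zero k)] at h
    simp [PP, map_add, PowerSeries.coeff_succ_X_mul, coeff_C_mul, h]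

lemma contFrac_zero_mul (j : ℕ) : (1 - C (a j) * X) * contFrac a l 0 j = 1 := by
  rw [contFrac]
  exact mul_invOfUnit _ 1 (by simp)

lemma contFrac_succ_mul (d j : ℕ) :
    (1 - C (a j) * X - C (l (j + 1)) * X ^ 2 * contFrac a l d (j + 1)) *
      contFrac a l (d + 1) j = 1 := by
  rw [contFrac]
  exact mul_invOfUnit _ 1 (by simp)

lemma PP_sub (d : ℕ) : ∀ m : ℕ, X ^ (m + 2 * d + 3) ∣
    (PP a l (m + 1) - X * contFrac a l d (m + 1) * PP a l m) := by
  induction d with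
  | zero =>
    intro m
    have h1 := PP_succ_eq a l m
    have huv := contFrac_zero_mul a l (m + 1)
    have key : PP a l (m + 1) * (1 - C (a (m + 1)) * X) - X * PP a l m
        = X * C (l (m + 2)) * PP a l (m + 2) := by linear_combination h1
    have hdvd : (X : PowerSeries R) ^ (m + 2 * 0 + 3) ∣
        X * C (l (m + 2)) * PP a l (m + 2) := by
      obtain ⟨q, hq⟩ := X_pow_dvd_PP a l (m + 2)
      refine ⟨C (l (m + 2)) * q, ?_⟩
      rw [hq, show m + 2 * 0 + 3 = (m + 2) + 1 by ring, pow_succ]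
      ring
    have heq : PP a l (m + 1) - X * contFrac a l 0 (m + 1) * PP a l m
        = contFrac a l 0 (m + 1) *
          (PP a l (m + 1) * (1 - C (a (m + 1)) * X) - X * PP a l m) := by
      linear_combination (-(PP a l (m + 1))) * huv
    rw [heq, key]
    exact Dvd.dvd.mul_left hdvd _
  | succ d ih =>
    intro m
    have h1 := PP_succ_eq a l m
    have huv := contFrac_succ_mul a l d (m + 1)
    have key : PP a l (m + 1) * (1 - C (a (m + 1)) * X
          - C (l (m + 2)) * X ^ 2 * contFrac a l d (m + 2)) - X * PP a l m
        = X * C (l (m + 2)) *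
          (PP a l (m + 2) - X * contFrac a l d (m + 2) * PP a l (m + 1)) := by
      linear_combination h1
    have hdvd : (X : PowerSeries R) ^ (m + 2 * (d + 1) + 3) ∣ X * C (l (m + 2)) *
        (PP a l (m + 2) - X * contFrac a l d (m + 2) * PP a l (m + 1)) := by
      obtain ⟨q, hq⟩ := ih (m + 1)
      refine ⟨C (l (m + 2)) * q, ?_⟩
      rw [hq, show m + 2 * (d + 1) + 3 = (m + 1 + 2 * d + 3) + 1 by ring, pow_succ]
      ring
    have heq : PP a l (m + 1) - X * contFrac a l (d + 1) (m + 1) * PP a l m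
        = contFrac a l (d + 1) (m + 1) *
          (PP a l (m + 1) * (1 - C (a (m + 1)) * X
            - C (l (m + 2)) * X ^ 2 * contFrac a l d (m + 2)) - X * PP a l m) := by
      linear_combination (-(PP a l (m + 1))) * huv
    rw [heq, key]
    exact Dvd.dvd.mul_left hdvd _

lemma PP_sub_contFrac (N : ℕ) : (X : PowerSeries R) ^ (2 * N + 2) ∣
    (PP a l 0 - contFrac a l N 0) := by
  rcases N with _ | d
  · have h1 := PP_zero_eq a l
    have huv := contFrac_zero_mul a l 0
    have key : PP a l 0 * (1 - C (a 0) * X) - 1 = X * C (l 1) * PP a l 1 := by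
      linear_combination h1
    have hdvd : (X : PowerSeries R) ^ (2 * 0 + 2) ∣ X * C (l 1) * PP a l 1 := by
      obtain ⟨q, hq⟩ := X_pow_dvd_PP a l 1
      refine ⟨C (l 1) * q, ?_⟩
      rw [hq]
      ring
    have heq : PP a l 0 - contFrac a l 0 0
        = contFrac a l 0 0 * (PP a l 0 * (1 - C (a 0) * X) - 1) := by
      linear_combination (-(PP a l 0)) * huv
    rw [heq, key]
    exact Dvd.dvd.mul_left hdvd _
  · have h1 := PP_zero_eq a l
    have huv := contFrac_succ_mul a l d 0
    have key : PP a l 0 * (1 - C (a 0) * X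
          - C (l (0 + 1)) * X ^ 2 * contFrac a l d (0 + 1)) - 1
        = X * C (l 1) * (PP a l 1 - X * contFrac a l d 1 * PP a l 0) := by
      norm_num
      linear_combination h1
    have hdvd : (X : PowerSeries R) ^ (2 * (d + 1) + 2) ∣
        X * C (l 1) * (PP a l 1 - X * contFrac a l d 1 * PP a l 0) := by
      obtain ⟨q, hq⟩ := PP_sub a l d 0
      refine ⟨C (l 1) * q, ?_⟩
      rw [hq, show 2 * (d + 1) + 2 = (0 + 2 * d + 3) + 1 by ring, pow_succ]
      ring
    have heq : PP a l 0 - contFrac a l (d + 1) 0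
        = contFrac a l (d + 1) 0 * (PP a l 0 * (1 - C (a 0) * X
            - C (l (0 + 1)) * X ^ 2 * contFrac a l d (0 + 1)) - 1) := by
      linear_combination (-(PP a l 0)) * huv
    rw [heq, key]
    exact Dvd.dvd.mul_left hdvd _

lemma motzkinSet_eq_pathSet (m : ℕ) : motzkinSet m = pathSet m 0 := by
  unfold motzkinSet pathSet
  ext f
  simp only [Finset.mem_filter, Finset.mem_univ, true_and]
  exact and_congr_right fun _ => and_congr_left fun _ => Fin.ext_iff

end Aux

/-- Flajolet's theorem: the generating function of the weighted Motzkin path sums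
`μ_n = ∑_{π ∈ M_n} v(π)` agrees modulo `z^{N+1}` with the finite continued fraction
`1/(1 - a_0 z - λ_1 z²/(1 - a_1 z - ⋯ /(1 - a_N z)))`. -/
theorem motzkin_contFrac {R : Type*} [CommRing R] (a l : ℕ → R) (N n : ℕ) (hn : n ≤ N) :
    coeff n (PowerSeries.mk (fun m => ∑ f ∈ motzkinSet m, motzkinVal a l f)) =
      coeff n (contFrac a l N 0) := by
  have h := PP_sub_contFrac a l N
  rw [X_pow_dvd_iff] at h
  have h2 := h n (by omega)
  rw [map_sub, sub_eq_zero] at h2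
  have e : (PowerSeries.mk fun m => ∑ f ∈ motzkinSet m, motzkinVal a l f) = PP a l 0 := by
    unfold PP SS
    simp only [motzkinSet_eq_pathSet]
  rw [e, h2]
end

section
/- With free cumulants c_n defined by C(zM(z)) = M(z) where M(z) = 1 + Σ μ_n z^n and C(z) = 1 + Σ c_n z^n, and boolean cumulants h_n defined by M(z) = 1/(1 − Σ h_n z^n), one has for all n ≥ 2: c_n = Σ_{r=1}^{n−1} ((−1)^{r−1}/(n−1)) · binom(n−1, r) · Σ_{i_1+⋯+i_r = n, i_j ≥ 1} h_{i_1} ⋯ h_{i_r}. -/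
open PowerSeries

section Aux

open Finset

lemma coeff_pow_tuple {R : Type*} [CommSemiring R] (φ : PowerSeries R) (r n : ℕ) :
    coeff n (φ ^ r) = ∑ i ∈ Finset.Nat.antidiagonalTuple r n, ∏ j, coeff (i j) φ := by
  have h : φ ^ r = ∏ _j : Fin r, (fun _ => φ) _j := by simp
  rw [h, coeff_prod]
  refine Finset.sum_nbij' (fun l => ⇑l) (fun i => Finsupp.equivFunOnFinite.symm i)
    ?_ ?_ ?_ ?_ ?_
  · intro l hl
    simp only [Finset.mem_finsuppAntidiag] at hl
    exact Finset.Nat.mem_antidiagonalTuple.mpr hl.1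
  · intro i hi
    simp only [Finset.mem_finsuppAntidiag]
    refine ⟨?_, Finset.subset_univ _⟩
    simpa using Finset.Nat.mem_antidiagonalTuple.mp hi
  · intro l hl; ext j; simp
  · intro i hi; ext j; simp
  · intro l hl; rfl

lemma nsmul_cancel {R : Type*} [AddCommMonoid R] [Module ℚ R] {k : ℕ} (hk : k ≠ 0) {x : R}
    (h : k • x = 0) : x = 0 := by
  have h1 : ((k : ℚ)) • x = 0 := by rwa [Nat.cast_smul_eq_nsmul]
  have h2 := congrArg (fun z => ((k:ℚ))⁻¹ • z) h1
  simpa [smul_smul, inv_mul_cancel₀ (show (k:ℚ) ≠ 0 by exact_mod_cast hk)] using h2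

lemma nsmul_div {R : Type*} [AddCommGroup R] [Module ℚ R] {a b : ℕ} (ha : a ≠ 0) {x y : R}
    (h : a • x = b • y) : x = ((b : ℚ)/(a : ℚ)) • y := by
  have h1 : ((a : ℚ)) • x = ((b : ℚ)) • y := by
    rw [Nat.cast_smul_eq_nsmul, Nat.cast_smul_eq_nsmul]; exact h
  have h2 := congrArg (fun z => ((a:ℚ))⁻¹ • z) h1
  simpa [smul_smul, inv_mul_cancel₀ (show (a:ℚ) ≠ 0 by exact_mod_cast ha),
    div_eq_inv_mul] using h2

lemma deriv_mul_pow {R : Type*} [CommRing R] {M G : PowerSeries R} (hMG : M * G = 1) (k : ℕ) :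
    d⁄dX R M * G ^ (k+2) = -(d⁄dX R G * G ^ k) := by
  have h0 : M • d⁄dX R G + G • d⁄dX R M = 0 := by
    rw [← Derivation.leibniz, hMG, Derivation.map_one_eq_zero]
  rw [smul_eq_mul, smul_eq_mul] at h0
  have h1 : d⁄dX R M * G = -(d⁄dX R G * M) := by linear_combination h0
  calc d⁄dX R M * G ^ (k+2) = (d⁄dX R M * G) * G^(k+1) := by ring
  _ = -(d⁄dX R G * M) * G^(k+1) := by rw [h1]
  _ = -((d⁄dX R G * G^k) * (M * G)) := by ring
  _ = -(d⁄dX R G * G^k) := by rw [hMG, mul_one]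

lemma smul_coeff_deriv {R : Type*} [CommRing R] (G : PowerSeries R) (k : ℕ) :
    (k+1) • coeff k (d⁄dX R G * G ^ k) = (k+1) • coeff (k+1) (G^(k+1)) := by
  have h : d⁄dX R (G^(k+1)) = (k+1) • (d⁄dX R G * G ^ k) := by
    rw [Derivation.leibniz_pow]
    simp only [Nat.add_sub_cancel, smul_eq_mul]
    rw [mul_comm]
  have h2 := coeff_derivative (G^(k+1)) k
  rw [h, map_nsmul] at h2
  rw [h2, nsmul_eq_mul]
  push_cast
  ring

lemma coeff_inner_zero {R : Type*} [CommRing R] [Algebra ℚ R] {M G : PowerSeries R}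
    (hMG : M * G = 1) (k : ℕ) (hk : k ≠ 0) :
    coeff k (X * (d⁄dX R M * G ^ (k+1)) + G ^ k) = 0 := by
  obtain ⟨k', rfl⟩ : ∃ k', k = k' + 1 := ⟨k - 1, by omega⟩
  rw [deriv_mul_pow hMG k']
  apply nsmul_cancel (k := k'+1) (by omega)
  have hx : coeff (k'+1) (X * -(d⁄dX R G * G ^ k') + G^(k'+1))
      = -(coeff k' (d⁄dX R G * G ^ k')) + coeff (k'+1) (G^(k'+1)) := by
    rw [map_add, mul_neg, map_neg, coeff_succ_X_mul]
  rw [hx, smul_add, smul_neg, smul_coeff_deriv, neg_add_cancel]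

lemma coeff_term {R : Type*} [CommRing R] [Algebra ℚ R] {M G : PowerSeries R}
    (hMG : M * G = 1) {n m : ℕ} (hm1 : 1 ≤ m) (hm2 : m ≤ n + 1) :
    coeff n ((X*M)^(m-1) * ((X * d⁄dX R M + M) * G ^ (n+1))) =
      if m = n + 1 then 1 else 0 := by
  obtain ⟨m', rfl⟩ : ∃ m', m = m' + 1 := ⟨m-1, by omega⟩
  obtain ⟨k, rfl⟩ : ∃ k, n = k + m' := ⟨n - m', by omega⟩
  have h1 : M ^ m' * G ^ (k+m'+1) = G^(k+1) := by
    rw [show G^(k+m'+1) = G^m' * G^(k+1) by rw [← pow_add]; congr 1; omega, ← mul_assoc,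
      ← mul_pow, hMG, one_pow, one_mul]
  have h2 : M ^ (m'+1) * G ^ (k+m'+1) = G^k := by
    rw [show G^(k+m'+1) = G^(m'+1) * G^k by rw [← pow_add]; congr 1; omega, ← mul_assoc,
      ← mul_pow, hMG, one_pow, one_mul]
  have hsplit : (X*M)^(m'+1-1) * ((X * d⁄dX R M + M) * G ^ (k+m'+1))
      = X ^ m' * (X * (d⁄dX R M * G^(k+1)) + G^k) := by
    calc (X*M)^(m'+1-1) * ((X * d⁄dX R M + M) * G ^ (k+m'+1))
        = X^m' * (X * (d⁄dX R M * (M ^ m' * G^(k+m'+1))) + M^(m'+1) * G^(k+m'+1)) := by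
          simp only [Nat.add_sub_cancel]; ring
      _ = _ := by rw [h1, h2]
  rw [hsplit, coeff_X_pow_mul]
  by_cases hk : k = 0
  · subst hk
    rw [if_pos (by omega)]
    simp
  · rw [coeff_inner_zero hMG k hk, if_neg (by omega)]

lemma key1 {R : Type*} [CommRing R] [Algebra ℚ R] (M C G : PowerSeries R)
    (hcomp : ∀ n : ℕ, coeff n M =
      ∑ m ∈ Finset.range (n + 1), coeff m C * coeff n ((X * M) ^ m))
    (hMG : M * G = 1) (n : ℕ) :
    coeff n (d⁄dX R M * G ^ (n+1)) = (n+1) • coeff (n+1) C := by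
  set T : PowerSeries R := ∑ m ∈ Finset.range (n+2), coeff m C • (X*M)^m with hT
  have hvan : ∀ k m : ℕ, k < m → coeff k ((X*M)^m) = 0 := by
    intro k m hkm
    have hdvd : (X : PowerSeries R)^m ∣ (X*M)^m := by
      rw [mul_pow]; exact dvd_mul_right _ _
    exact (X_pow_dvd_iff.mp hdvd) k hkm
  have hTc : ∀ k, k ≤ n+1 → coeff k T = coeff k M := by
    intro k hk
    rw [hT, map_sum, hcomp k]
    simp only [map_smul, smul_eq_mul]
    symm
    apply Finset.sum_subset (Finset.range_subset_range.mpr (by omega))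
    intro m hm hnotm
    have hklt : k < m := by simp only [Finset.mem_range] at hm hnotm; omega
    rw [hvan k m hklt, mul_zero]
  have hTd : ∀ j, j ≤ n → coeff j (d⁄dX R T) = coeff j (d⁄dX R M) := by
    intro j hj
    rw [coeff_derivative, coeff_derivative, hTc (j+1) (by omega)]
  have hstep : coeff n (d⁄dX R M * G^(n+1)) = coeff n (d⁄dX R T * G^(n+1)) := by
    rw [coeff_mul, coeff_mul]
    apply Finset.sum_congr rfl
    intro p hp
    rw [Finset.HasAntidiagonal.mem_antidiagonal] at hp
    rw [hTd p.1 (by omega)]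
  have hTexp : d⁄dX R T * G^(n+1) = ∑ m ∈ Finset.range (n+2),
      coeff m C • (m • ((X*M)^(m-1) * ((X * d⁄dX R M + M) * G^(n+1)))) := by
    rw [hT, map_sum, Finset.sum_mul]
    apply Finset.sum_congr rfl
    intro m _
    rw [Derivation.map_smul, Derivation.leibniz_pow, Derivation.leibniz, derivative_X]
    simp only [smul_eq_mul, mul_one, smul_mul_assoc]
    ring_nf
  have heval : ∀ m ∈ Finset.range (n+2),
      coeff n (coeff m C • (m • ((X*M)^(m-1) * ((X * d⁄dX R M + M) * G^(n+1)))))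
      = if m = n+1 then (n+1) • coeff (n+1) C else 0 := by
    intro m hm
    rcases Nat.eq_zero_or_pos m with h0 | h1
    · subst h0; simp
    · rw [map_smul, map_nsmul,
        coeff_term hMG h1 (by simp only [Finset.mem_range] at hm; omega)]
      split_ifs with he
      · subst he
        simp only [smul_eq_mul, mul_one]
        rw [nsmul_eq_mul, nsmul_eq_mul]; ring
      · simp
  rw [hstep, hTexp, map_sum, Finset.sum_congr rfl heval, Finset.sum_ite_eq' (Finset.range (n+2))]
  rw [if_pos (by simp)]

end Aux

/-- Free cumulants in terms of boolean cumulants: with `M(z) = 1 + ∑ μ_n z^n`,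
`C(z) = 1 + ∑ c_n z^n` determined by `C(zM(z)) = M(z)` (the composition expressed
coefficient-wise, legitimately since `zM(z)` has zero constant term), and boolean
cumulants `h_n` given by `M(z)(1 − H(z)) = 1`, one has for `n ≥ 2`:
`c_n = ∑_{r=1}^{n−1} ((−1)^{r−1}/(n−1))·binom(n−1,r)·∑_{i_1+⋯+i_r=n, i_j≥1} h_{i_1}⋯h_{i_r}`. -/


theorem free_cumulants_eq_boolean_cumulant_sum
    {R : Type*} [CommRing R] [Algebra ℚ R] (M C H : PowerSeries R)
    (hM0 : constantCoeff M = 1) (hC0 : constantCoeff C = 1)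
    (hH0 : constantCoeff H = 0)
    (hcomp : ∀ n : ℕ, coeff n M =
      ∑ m ∈ Finset.range (n + 1), coeff m C * coeff n ((X * M) ^ m))
    (hMH : M * (1 - H) = 1) :
    ∀ n : ℕ, 2 ≤ n →
      coeff n C = ∑ r ∈ Finset.Icc 1 (n - 1),
        algebraMap ℚ R ((-1 : ℚ) ^ (r - 1) / (n - 1 : ℚ) * ((n - 1).choose r : ℚ)) *
          ∑ i ∈ (Finset.Nat.antidiagonalTuple r n).filter (fun i => ∀ j, i j ≠ 0),
            ∏ j, coeff (i j) H := by
  intro n hn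
  obtain ⟨p, rfl⟩ : ∃ p, n = p + 2 := ⟨n - 2, by omega⟩
  set G : PowerSeries R := 1 - H with hG
  -- step 1 : (p+1)•(p+2)• c = (p+2) • (-q) with q = coeff (p+2) (G^(p+1))
  have e1 := key1 M C G hcomp hMH (p+1)
  have hk2 : (p+1) • (d⁄dX R M * G^(p+2)) = -(d⁄dX R (G^(p+1))) := by
    rw [deriv_mul_pow hMH p, Derivation.leibniz_pow]
    simp only [Nat.add_sub_cancel, smul_eq_mul, smul_neg]
    rw [mul_comm]
  have e2 : ((p+1)*(p+2)) • coeff (p+2) C = (p+2) • (-(coeff (p+2) (G^(p+1)))) := by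
    have h3 : (p+1) • coeff (p+1) (d⁄dX R M * G^(p+2))
        = -(coeff (p+2) (G^(p+1)) * (p+2)) := by
      rw [← map_nsmul, hk2, map_neg, coeff_derivative]
      push_cast; ring
    rw [mul_smul, ← e1, h3, nsmul_eq_mul]
    push_cast; ring
  have hc : coeff (p+2) C = ((1 : ℚ)/(p+1)) • (-(coeff (p+2) (G^(p+1)))) := by
    have := nsmul_div (a := (p+1)*(p+2)) (b := p+2) (by positivity) e2
    rw [this]
    congr 1
    field_simp
    push_cast; ring
  -- step 2 : binomial expansion of G^(p+1)
  have hterm : ∀ r : ℕ, coeff (p+2) ((-H)^r * 1^(p+1-r) * ((p+1).choose r : PowerSeries R))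
      = ((-1:R)^r * ((p+1).choose r : R)) * coeff (p+2) (H^r) := by
    intro r
    rw [one_pow, mul_one, ← map_natCast (PowerSeries.C) ((p+1).choose r), coeff_mul_C,
      neg_pow, show ((-1 : PowerSeries R)) = PowerSeries.C (-1) by simp, ← map_pow,
      coeff_C_mul]
    ring
  have hGexp : coeff (p+2) (G^(p+1)) =
      ∑ r ∈ Finset.range (p+2), ((-1:R)^r * ((p+1).choose r : R)) * coeff (p+2) (H^r) := by
    rw [hG, sub_eq_neg_add, add_pow, map_sum]
    exact Finset.sum_congr rfl fun r _ => hterm r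
  have hrestrict : coeff (p+2) (G^(p+1)) =
      ∑ r ∈ Finset.Icc 1 (p+1), ((-1:R)^r * ((p+1).choose r : R)) * coeff (p+2) (H^r) := by
    rw [hGexp]
    symm
    apply Finset.sum_subset
    · intro r hr
      simp only [Finset.mem_Icc] at hr
      simp only [Finset.mem_range]; omega
    · intro r hr hnr
      have : r = 0 := by
        simp only [Finset.mem_range] at hr
        simp only [Finset.mem_Icc] at hnr; omega
      subst this
      simp [coeff_one]
  -- step 3 : tuple sums
  have hS : ∀ r : ℕ, (∑ i ∈ (Finset.Nat.antidiagonalTuple r (p+2)).filter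
        (fun i => ∀ j, i j ≠ 0), ∏ j, coeff (i j) H) = coeff (p+2) (H^r) := by
    intro r
    rw [coeff_pow_tuple]
    apply Finset.sum_filter_of_ne
    intro i _ hne j
    intro hij
    apply hne
    apply Finset.prod_eq_zero (Finset.mem_univ j)
    rw [hij, coeff_zero_eq_constantCoeff, hH0]
  -- final assembly
  rw [hc, hrestrict, ← Finset.sum_neg_distrib, Finset.smul_sum]
  apply Finset.sum_congr (by norm_num)
  intro r hr
  rw [Finset.mem_Icc] at hr
  obtain ⟨s, rfl⟩ : ∃ s, r = s + 1 := ⟨r-1, by omega⟩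
  rw [hS (s+1)]
  rw [show ((-1:R)^(s+1) * (((p+1).choose (s+1) : ℕ) : R))
      = algebraMap ℚ R ((-1:ℚ)^(s+1) * (((p+1).choose (s+1) : ℕ) : ℚ)) by
    rw [map_mul, map_pow, map_neg, map_one, map_natCast]]
  rw [Algebra.smul_def, ← neg_mul, ← mul_assoc, ← map_neg, ← map_mul]
  congr 2
  have h11 : ((p:ℚ)+2) - 1 = (p:ℚ)+1 := by ring
  push_cast
  rw [h11]
  have hp1 : ((p:ℚ)+1) ≠ 0 := by positivity
  field_simp
  ring
end

section
/- (Lagrange inversion consequence) If M(z) = 1 + Σ_{n≥1} μ_n z^n and C(z) = 1 + Σ_{n≥1} c_n z^n are formal power series over a Q-algebra with C(zM(z)) = M(z), then for n ≥ 2, c_n = −(1/(n−1)) · [z^n] (1/M(z)^{n−1}). -/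
open PowerSeries

private lemma cancel_nat {R : Type*} [CommRing R] [Algebra ℚ R] (k : ℕ) (hk : k ≠ 0)
    {a b : R} (h : (k : R) * a = (k : R) * b) : a = b := by
  have h1 : algebraMap ℚ R (1 / k) * (k : R) = 1 := by
    rw [show ((k : ℕ) : R) = algebraMap ℚ R k by simp, ← map_mul,
      one_div_mul_cancel (by exact_mod_cast hk)]
    simp
  calc a = (algebraMap ℚ R (1 / k) * k) * a := by rw [h1, one_mul]
    _ = algebraMap ℚ R (1 / k) * ((k : R) * a) := by ring
    _ = algebraMap ℚ R (1 / k) * ((k : R) * b) := by rw [h]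
    _ = (algebraMap ℚ R (1 / k) * k) * b := by ring
    _ = b := by rw [h1, one_mul]

/-- Lagrange inversion consequence: if `M(z) = 1 + ∑ μ_n z^n` and
`C(z) = 1 + ∑ c_n z^n` satisfy `C(zM(z)) = M(z)` (composition expressed
coefficient-wise, valid since `zM(z)` has zero constant term), then for `n ≥ 2`,
`c_n = −(1/(n−1))·[z^n] M(z)^{−(n−1)}`, where `M⁻¹ = invOfUnit M 1` is the power
series inverse of `M` (whose constant coefficient is `1`). -/
theorem free_cumulant_lagrange_inversion
    {R : Type*} [CommRing R] [Algebra ℚ R] (M C : PowerSeries R)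
    (hM0 : constantCoeff M = 1) (hC0 : constantCoeff C = 1)
    (hcomp : ∀ n : ℕ, coeff n M =
      ∑ m ∈ Finset.range (n + 1), coeff m C * coeff n ((X * M) ^ m)) :
    ∀ n : ℕ, 2 ≤ n →
      coeff n C =
        - algebraMap ℚ R (1 / (n - 1 : ℚ)) * coeff n (invOfUnit M 1 ^ (n - 1)) := by
  intro n hn
  obtain ⟨q, rfl⟩ : ∃ q, n = q + 2 := ⟨n - 2, by omega⟩
  set V : PowerSeries R := invOfUnit M 1 with hVdef
  have hMV : M * V = 1 := mul_invOfUnit M 1 (by simp [hM0])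
  -- derivative of V
  have hVder : d⁄dX R V = -(V ^ 2 * d⁄dX R M) := by
    have h0 : M * d⁄dX R V + V * d⁄dX R M = 0 := by
      have := Derivation.leibniz (d⁄dX R) M V
      rw [hMV] at this
      simpa [smul_eq_mul] using this.symm
    have h1 : V * (M * d⁄dX R V + V * d⁄dX R M) = 0 := by rw [h0, mul_zero]
    have h2 : V * M = 1 := by rw [mul_comm]; exact hMV
    calc d⁄dX R V = V * M * d⁄dX R V := by rw [h2, one_mul]
      _ = V * (M * d⁄dX R V + V * d⁄dX R M) - V ^ 2 * d⁄dX R M := by ring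
      _ = -(V ^ 2 * d⁄dX R M) := by rw [h1]; ring
  -- V^(a+b) * M^b = V^a
  have hVM : ∀ a b : ℕ, V ^ (a + b) * M ^ b = V ^ a := by
    intro a b
    rw [pow_add, mul_assoc, ← mul_pow, mul_comm V M, hMV, one_pow, mul_one]
  -- derivative of V^(j+1)
  have hDV : ∀ j : ℕ, d⁄dX R (V ^ (j + 1))
      = -(((j + 1 : ℕ) : R) • (V ^ (j + 2) * d⁄dX R M)) := by
    intro j
    rw [Derivation.leibniz_pow, hVder, ← Nat.cast_smul_eq_nsmul R (j + 1), ← smul_neg]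
    congr 1
    simp only [Nat.add_sub_cancel, smul_eq_mul]
    rw [mul_neg, ← mul_assoc, ← pow_add]
  -- key lemma
  have key : ∀ k : ℕ, 1 ≤ k →
      coeff k (X * (V ^ (k + 1) * d⁄dX R M)) = -coeff k (V ^ k) := by
    intro k hk
    obtain ⟨j, rfl⟩ : ∃ j, k = j + 1 := ⟨k - 1, by omega⟩
    have e1 : coeff j (d⁄dX R (V ^ (j + 1))) = coeff (j + 1) (V ^ (j + 1)) * (j + 1) :=
      coeff_derivative _ j
    have e2 : coeff (j + 1) (X * (V ^ (j + 1 + 1) * d⁄dX R M))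
        = coeff j (V ^ (j + 2) * d⁄dX R M) := coeff_succ_X_mul j _
    have e3 : coeff j (d⁄dX R (V ^ (j + 1)))
        = -(((j + 1 : ℕ) : R) * coeff j (V ^ (j + 2) * d⁄dX R M)) := by
      rw [hDV j]; simp
    apply cancel_nat (j + 1) (by omega)
    rw [e2]
    push_cast at e1 e3 ⊢
    linear_combination e3 - e1
  -- F : truncated composition
  set F : PowerSeries R :=
    ∑ m ∈ Finset.range (q + 2 + 1), (coeff m C) • ((X * M) ^ m) with hFdef
  have hXM : ∀ m : ℕ, (X * M : PowerSeries R) ^ m = X ^ m * M ^ m := fun m => mul_pow X M m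
  have hFcoeff : ∀ j : ℕ, j ≤ q + 2 → coeff j F = coeff j M := by
    intro j hj
    rw [hFdef, map_sum]
    simp only [LinearMap.map_smul, smul_eq_mul]
    rw [hcomp j]
    apply (Finset.sum_subset (Finset.range_subset_range.2 (by omega)) ?_).symm
    intro m hm hm'
    simp only [Finset.mem_range] at hm hm'
    have : coeff j ((X * M) ^ m) = 0 := by
      rw [hXM, coeff_X_pow_mul', if_neg (by omega)]
    rw [this, mul_zero]
  -- coefficients of V^(q+2) * D F and V^(q+2) * D M agree at q+1
  have hder : coeff (q + 1) (V ^ (q + 2) * d⁄dX R F)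
      = coeff (q + 1) (V ^ (q + 2) * d⁄dX R M) := by
    have hdiff : ∀ j : ℕ, j ≤ q + 1 → coeff j (d⁄dX R F - d⁄dX R M) = 0 := by
      intro j hj
      rw [map_sub, coeff_derivative, coeff_derivative, hFcoeff (j + 1) (by omega), sub_self]
    have h0 : coeff (q + 1) (V ^ (q + 2) * (d⁄dX R F - d⁄dX R M)) = 0 := by
      rw [coeff_mul]
      apply Finset.sum_eq_zero
      intro p hp
      rw [Finset.HasAntidiagonal.mem_antidiagonal] at hp
      rw [hdiff p.2 (by omega), mul_zero]
    have h2 : coeff (q + 1) (V ^ (q + 2) * d⁄dX R F)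
        - coeff (q + 1) (V ^ (q + 2) * d⁄dX R M) = 0 := by
      rw [← map_sub, ← mul_sub]; exact h0
    exact sub_eq_zero.1 h2
  have hDXM : d⁄dX R (X * M) = M + X * d⁄dX R M := by
    rw [Derivation.leibniz]
    simp only [smul_eq_mul, derivative_X, mul_one]
    ring
  -- general expansion
  have hexpgen : ∀ i k : ℕ, q + 2 = k + (i + 1) →
      V ^ (q + 2) * d⁄dX R ((X * M) ^ (i + 1))
        = PowerSeries.C ((i + 1 : ℕ) : R) * (X ^ i * (V ^ k + X * (V ^ (k + 1) * d⁄dX R M))) := by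
    intro i k hik
    rw [Derivation.leibniz_pow, hDXM]
    simp only [Nat.add_sub_cancel, smul_eq_mul, nsmul_eq_mul, hXM]
    rw [← map_natCast (PowerSeries.C (R := R)) (i + 1)]
    have e1 : V ^ (q + 2) * M ^ i * M = V ^ k := by
      have h1 : V ^ (q + 2) * M ^ i * M = V ^ (k + (i + 1)) * M ^ (i + 1) := by
        rw [← hik, pow_succ]; ring
      rw [h1, hVM]
    have e2 : V ^ (q + 2) * M ^ i = V ^ (k + 1) := by
      rw [show q + 2 = (k + 1) + i by omega, hVM]
    calc V ^ (q + 2) * (PowerSeries.C ((i + 1 : ℕ) : R) * (X ^ i * M ^ i * (M + X * d⁄dX R M)))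
        = PowerSeries.C ((i + 1 : ℕ) : R) * (X ^ i * (V ^ (q + 2) * M ^ i * M
            + X * (V ^ (q + 2) * M ^ i * d⁄dX R M))) := by ring
      _ = _ := by rw [e1, e2]
  have hterm : ∀ m : ℕ, m ∈ Finset.range (q + 2 + 1) →
      (coeff (q + 1)) ((coeff m C) • (V ^ (q + 2) * d⁄dX R ((X * M) ^ m)))
        = if m = q + 2 then ((q + 2 : ℕ) : R) * coeff (q + 2) C else 0 := by
    intro m hm
    rw [Finset.mem_range] at hm
    rcases Nat.eq_zero_or_pos m with rfl | hm1
    · simp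
    obtain ⟨i, rfl⟩ : ∃ i, m = i + 1 := ⟨m - 1, by omega⟩
    rcases Nat.lt_or_ge i (q + 1) with hi | hi
    · obtain ⟨d, hd⟩ : ∃ d, q + 1 - i = d + 1 := ⟨q - i, by omega⟩
      rw [LinearMap.map_smul, smul_eq_mul, hexpgen i (d + 1) (by omega), coeff_C_mul,
        coeff_X_pow_mul', if_pos (by omega : i ≤ q + 1), hd, map_add,
        key (d + 1) (by omega), if_neg (by omega)]
      ring
    · have hi' : i = q + 1 := by omega
      subst hi'
      rw [LinearMap.map_smul, smul_eq_mul, hexpgen (q + 1) 0 (by omega), coeff_C_mul,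
        coeff_X_pow_mul', if_pos (le_refl (q + 1)), Nat.sub_self, map_add, if_pos rfl]
      have c1 : coeff 0 ((V : PowerSeries R) ^ 0) = 1 := by simp
      have c2 : coeff 0 (X * (V ^ (0 + 1) * d⁄dX R M)) = 0 := by
        simp [coeff_zero_eq_constantCoeff]
      rw [c1, c2]
      push_cast
      ring
  have hDF : coeff (q + 1) (V ^ (q + 2) * d⁄dX R F)
      = ((q + 2 : ℕ) : R) * coeff (q + 2) C := by
    have hsum : V ^ (q + 2) * d⁄dX R F
        = ∑ m ∈ Finset.range (q + 2 + 1),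
            (coeff m C) • (V ^ (q + 2) * d⁄dX R ((X * M) ^ m)) := by
      rw [hFdef, map_sum, Finset.mul_sum]
      refine Finset.sum_congr rfl fun m _ => ?_
      rw [Derivation.map_smul, mul_smul_comm]
    rw [hsum, map_sum, Finset.sum_congr rfl hterm, Finset.sum_ite_eq']
    rw [if_pos (Finset.self_mem_range_succ (q + 2))]
  -- relate coeff (q+1) (V^(q+2) * D M) to coeff (q+2) (V^(q+1))
  have hfin : ((q + 1 : ℕ) : R) * coeff (q + 1) (V ^ (q + 2) * d⁄dX R M)
      = -(coeff (q + 2) (V ^ (q + 1)) * ((q + 2 : ℕ) : R)) := by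
    have e1 : coeff (q + 1) (d⁄dX R (V ^ (q + 1)))
        = coeff (q + 2) (V ^ (q + 1)) * (((q + 1 : ℕ) : R) + 1) := coeff_derivative _ (q + 1)
    have e2 : coeff (q + 1) (d⁄dX R (V ^ (q + 1)))
        = -(((q + 1 : ℕ) : R) * coeff (q + 1) (V ^ (q + 2) * d⁄dX R M)) := by
      rw [hDV q]; simp
    push_cast at e1 e2 ⊢
    linear_combination e2 - e1
  -- main identity
  have hmain : ((q + 1 : ℕ) : R) * coeff (q + 2) C = -(coeff (q + 2) (V ^ (q + 1))) := by
    apply cancel_nat (q + 2) (by omega)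
    have hA : coeff (q + 1) (V ^ (q + 2) * d⁄dX R M)
        = ((q + 2 : ℕ) : R) * coeff (q + 2) C := by rw [← hder, hDF]
    push_cast at hA hfin ⊢
    linear_combination hfin - ((q : R) + 1) * hA
  -- conclude
  have hq1 : ((q + 2 : ℕ) : ℚ) - 1 = ((q + 1 : ℕ) : ℚ) := by push_cast; ring
  have hu : algebraMap ℚ R (1 / (((q + 2 : ℕ) : ℚ) - 1)) * ((q + 1 : ℕ) : R) = 1 := by
    rw [hq1, show (((q + 1 : ℕ)) : R) = algebraMap ℚ R ((q + 1 : ℕ) : ℚ) by simp, ← map_mul,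
      one_div_mul_cancel (Nat.cast_ne_zero.2 (by omega)), map_one]
  have hgoal : coeff (q + 2) C
      = - algebraMap ℚ R (1 / (((q + 2 : ℕ) : ℚ) - 1)) * coeff (q + 2) (V ^ (q + 1)) := by
    calc coeff (q + 2) C
        = (algebraMap ℚ R (1 / (((q + 2 : ℕ) : ℚ) - 1)) * ((q + 1 : ℕ) : R))
            * coeff (q + 2) C := by rw [hu, one_mul]
      _ = algebraMap ℚ R (1 / (((q + 2 : ℕ) : ℚ) - 1))
            * (((q + 1 : ℕ) : R) * coeff (q + 2) C) := by ring
      _ = algebraMap ℚ R (1 / (((q + 2 : ℕ) : ℚ) - 1))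
            * (-(coeff (q + 2) (V ^ (q + 1)))) := by rw [hmain]
      _ = - algebraMap ℚ R (1 / (((q + 2 : ℕ) : ℚ) - 1)) * coeff (q + 2) (V ^ (q + 1)) := by
            ring
  exact hgoal
end

section
/- Let μ_n = Σ_{π ∈ M_n} v(π) be the weighted sum over Motzkin paths of length n with weights 1 (rise), a_y (horizontal at level y), λ_y (fall from level y), and let c_n be the free cumulants defined by C(zM(z)) = M(z), M(z) = 1 + Σ μ_n z^n. Then for n ≥ 2: c_n = Σ_{π ∈ M_n} ((−1)^{|π|₀ − 1}/(n−1)) · binom(n−1, |π|₀) · v(π), where |π|₀ is the number of returns of π to level 0 (the number of indices 0 < i ≤ n with π(i) = 0). -/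
open PowerSeries

/-- `|π|₀`: the number of returns of the path to level `0`, i.e. the number of
indices `0 < i ≤ n` with `π(i) = 0`. -/
def returnsToZero {n : ℕ} (f : Fin (n + 1) → Fin (n + 1)) : ℕ :=
  (Finset.univ.filter fun i : Fin n => f i.succ = 0).card

namespace MotzkinAux

noncomputable local instance : DecidableEq (ℕ → ℕ) := Classical.decEq _

variable {R : Type*} [CommRing R]

/-- valuation of an ℕ-indexed path -/
noncomputable def nval (a l : ℕ → R) (n : ℕ) (g : ℕ → ℕ) : R :=
  ∏ i ∈ Finset.range n,
    (if g (i+1) = g i + 1 then 1 else if g (i+1) = g i then a (g i) else l (g i))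

/-- returns to zero of an ℕ-indexed path -/
noncomputable def nret (n : ℕ) (g : ℕ → ℕ) : ℕ :=
  ((Finset.range n).filter fun i => g (i+1) = 0).card

/-- the ℕ-indexed path predicate -/
def isNM (n : ℕ) (g : ℕ → ℕ) : Prop :=
  g 0 = 0 ∧ g n = 0 ∧ (∀ i, n < i → g i = 0) ∧
    ∀ i < n, g (i+1) ≤ g i + 1 ∧ g i ≤ g (i+1) + 1

def pad {n : ℕ} (f : Fin (n+1) → Fin (n+1)) : ℕ → ℕ :=
  fun i => if h : i ≤ n then (f ⟨i, Nat.lt_succ_of_le h⟩ : ℕ) else 0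

theorem pad_injective {n : ℕ} : Function.Injective (pad (n := n)) := by
  intro f g h
  funext i
  have := congrFun h (i : ℕ)
  simp only [pad, dif_pos (Nat.lt_succ_iff.mp i.isLt)] at this
  exact Fin.ext (by simpa using this)

theorem mem_motzkinSet {n : ℕ} {f : Fin (n+1) → Fin (n+1)} :
    f ∈ motzkinSet n ↔ (f 0 = 0 ∧ f (Fin.last n) = 0 ∧
    ∀ i : Fin n, (f i.succ : ℕ) ≤ (f i.castSucc : ℕ) + 1 ∧
      (f i.castSucc : ℕ) ≤ (f i.succ : ℕ) + 1) := by
  simp [motzkinSet]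

theorem isNM_pad {n : ℕ} {f : Fin (n+1) → Fin (n+1)} (hf : f ∈ motzkinSet n) :
    isNM n (pad f) := by
  rw [mem_motzkinSet] at hf
  obtain ⟨h0, hl, hs⟩ := hf
  refine ⟨?_, ?_, ?_, ?_⟩
  · simp only [pad, dif_pos (Nat.zero_le n)]
    have : (⟨0, Nat.zero_lt_succ n⟩ : Fin (n+1)) = 0 := by ext; simp
    rw [this, h0]; simp
  · simp only [pad, dif_pos (le_refl n)]
    have : (⟨n, Nat.lt_succ_self n⟩ : Fin (n+1)) = Fin.last n := rfl
    rw [this, hl]; simp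
  · intro i hi
    simp only [pad, dif_neg (by omega : ¬ i ≤ n)]
  · intro i hi
    have h1 : i ≤ n := le_of_lt hi
    have h2 : i + 1 ≤ n := hi
    simp only [pad, dif_pos h1, dif_pos h2]
    have := hs ⟨i, hi⟩
    simpa [Fin.succ, Fin.castSucc, Fin.castAdd, Fin.castLE] using this

theorem isNM_le {n : ℕ} {g : ℕ → ℕ} (hg : isNM n g) : ∀ i, g i ≤ i := by
  obtain ⟨h0, hl, hz, hs⟩ := hg
  intro i
  induction i with
  | zero => omega
  | succ i ih =>
    by_cases hi : i < n
    · have := (hs i hi).1; omega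
    · have := hz (i+1) (by omega); omega

theorem mem_NM_iff {n : ℕ} {g : ℕ → ℕ} :
    g ∈ (motzkinSet n).image pad ↔ isNM n g := by
  constructor
  · rintro hg
    obtain ⟨f, hf, rfl⟩ := Finset.mem_image.mp hg
    exact isNM_pad hf
  · intro hg
    have hb : ∀ i : Fin (n+1), g i < n + 1 :=
      fun i => Nat.lt_succ_of_le (le_trans (isNM_le hg i) (Nat.lt_succ_iff.mp i.isLt))
    refine Finset.mem_image.mpr ⟨fun i => ⟨g i, hb i⟩, ?_, ?_⟩
    · obtain ⟨h0, hl, hz, hs⟩ := hg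
      rw [mem_motzkinSet]
      refine ⟨by ext; simpa using h0, by ext; simpa [Fin.last] using hl, ?_⟩
      intro i
      have := hs i i.isLt
      simpa [Fin.succ, Fin.castSucc, Fin.castAdd, Fin.castLE] using this
    · funext i
      by_cases hi : i ≤ n
      · simp only [pad, dif_pos hi]
      · simp only [pad, dif_neg hi]
        exact (hg.2.2.1 i (by omega)).symm

theorem val_pad (a l : ℕ → R) {n : ℕ} (f : Fin (n+1) → Fin (n+1)) :
    motzkinVal a l f = nval a l n (pad f) := by
  rw [motzkinVal, nval, ← Fin.prod_univ_eq_prod_range]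
  refine Finset.prod_congr rfl fun i _ => ?_
  have e1 : pad f ((i : ℕ) + 1) = (f i.succ : ℕ) := by
    have h2 : (i : ℕ) + 1 ≤ n := i.isLt
    simp only [pad, dif_pos h2]
    congr 1
  have e2 : pad f (i : ℕ) = (f i.castSucc : ℕ) := by
    have h1 : (i : ℕ) ≤ n := le_of_lt i.isLt
    simp only [pad, dif_pos h1]
    congr 1
  rw [e1, e2]

theorem ret_pad {n : ℕ} (f : Fin (n+1) → Fin (n+1)) :
    returnsToZero f = nret n (pad f) := by
  rw [returnsToZero, nret]
  apply Finset.card_bij (fun (i : Fin n) _ => (i : ℕ))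
  · intro i hi
    simp only [Finset.mem_filter, Finset.mem_univ, true_and] at hi
    simp only [Finset.mem_filter, Finset.mem_range]
    refine ⟨i.isLt, ?_⟩
    have h2 : (i : ℕ) + 1 ≤ n := i.isLt
    simp only [pad, dif_pos h2]
    have : f ⟨(i:ℕ)+1, Nat.lt_succ_of_le h2⟩ = f i.succ := by congr 1
    rw [this, hi]; simp
  · intro i _ j _ h
    exact Fin.ext h
  · intro j hj
    simp only [Finset.mem_filter, Finset.mem_range] at hj
    obtain ⟨hj1, hj2⟩ := hj
    refine ⟨⟨j, hj1⟩, ?_, rfl⟩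
    simp only [Finset.mem_filter, Finset.mem_univ, true_and]
    have h2 : j + 1 ≤ n := hj1
    simp only [pad, dif_pos h2] at hj2
    have : f (⟨j, hj1⟩ : Fin n).succ = f ⟨j+1, Nat.lt_succ_of_le h2⟩ := by congr 1
    rw [this]
    exact Fin.ext (by simpa using hj2)



/-- weighted sum over Motzkin paths of length `n` with exactly `r` returns, ℕ-level -/
noncomputable def MSum (a l : ℕ → R) (n r : ℕ) : R :=
  ∑ g ∈ ((motzkinSet n).image pad).filter (fun g => nret n g = r), nval a l n g

theorem MSum_eq_fin (a l : ℕ → R) (n r : ℕ) :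
    MSum a l n r
      = ∑ f ∈ (motzkinSet n).filter (fun f => returnsToZero f = r), motzkinVal a l f := by
  rw [MSum, Finset.filter_image,
    Finset.sum_image (fun x _ y _ h => pad_injective h)]
  apply Finset.sum_congr
  · congr 1; funext f; rw [ret_pad]
  · intro f _; exact (val_pad a l f).symm

theorem nret_le {n : ℕ} (g : ℕ → ℕ) : nret n g ≤ n := by
  calc nret n g ≤ (Finset.range n).card := Finset.card_filter_le _ _
  _ = n := Finset.card_range n

theorem MSum_eq_zero_of_gt {a l : ℕ → R} {n r : ℕ} (h : n < r) : MSum a l n r = 0 := by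
  rw [MSum, Finset.filter_false_of_mem, Finset.sum_empty]
  intro g _
  exact fun hc => absurd hc.symm.le (by have := nret_le (n := n) g; omega)

theorem nret_pos {n : ℕ} {g : ℕ → ℕ} (hg : isNM n g) (hn : 1 ≤ n) : 1 ≤ nret n g := by
  rw [nret, Nat.succ_le_iff, Finset.card_pos]
  refine ⟨n - 1, Finset.mem_filter.mpr ⟨Finset.mem_range.mpr (by omega), ?_⟩⟩
  rw [show n - 1 + 1 = n by omega]
  exact hg.2.1

theorem MSum_zero_ret {a l : ℕ → R} {n : ℕ} (hn : 1 ≤ n) : MSum a l n 0 = 0 := by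
  rw [MSum, Finset.filter_false_of_mem, Finset.sum_empty]
  intro g hg
  have := nret_pos (mem_NM_iff.mp hg) hn
  omega

theorem NM_zero : ((motzkinSet 0).image pad : Finset (ℕ → ℕ)) = {fun _ => 0} := by
  ext g
  rw [mem_NM_iff, Finset.mem_singleton]
  constructor
  · intro hg
    funext i
    rcases Nat.eq_zero_or_pos i with rfl | hi
    · exact hg.1
    · exact hg.2.2.1 i hi
  · rintro rfl
    exact ⟨rfl, rfl, fun _ _ => rfl, fun i hi => by omega⟩

theorem MSum_zero_zero (a l : ℕ → R) : MSum a l 0 0 = 1 := by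
  rw [MSum, NM_zero]
  rw [Finset.filter_singleton, if_pos (by simp [nret])]
  simp [nval]

theorem MSum_zero_of_pos (a l : ℕ → R) {r : ℕ} (hr : 1 ≤ r) : MSum a l 0 r = 0 :=
  MSum_eq_zero_of_gt (by omega)

open scoped Classical in
/-- first return to zero -/
noncomputable def fr (g : ℕ → ℕ) : ℕ :=
  if h : ∃ k, 0 < k ∧ g k = 0 then Nat.find h else 0

/-- truncation to `[0,k]` -/
def tr (k : ℕ) (g : ℕ → ℕ) : ℕ → ℕ := fun i => if i ≤ k then g i else 0

/-- shift by `k`, cut at length `m` -/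
def sh (k m : ℕ) (g : ℕ → ℕ) : ℕ → ℕ := fun i => if i ≤ m then g (k+i) else 0

/-- concatenation -/
def glue (k : ℕ) (σ τ : ℕ → ℕ) : ℕ → ℕ := fun i => if i ≤ k then σ i else τ (i - k)

theorem fr_spec {n : ℕ} {g : ℕ → ℕ} (hg : isNM n g) (hn : 1 ≤ n) :
    1 ≤ fr g ∧ fr g ≤ n ∧ g (fr g) = 0 ∧ ∀ j, 0 < j → j < fr g → g j ≠ 0 := by
  classical
  have hex : ∃ k, 0 < k ∧ g k = 0 := ⟨n, hn, hg.2.1⟩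
  rw [fr, dif_pos hex]
  have h1 := Nat.find_spec hex
  refine ⟨h1.1, ?_, h1.2, ?_⟩
  · by_contra hc
    exact absurd (Nat.find_le ⟨hn, hg.2.1⟩) hc
  · intro j hj1 hj2 hj3
    exact absurd hj2 (not_lt_of_ge (Nat.find_le ⟨hj1, hj3⟩))

/-- unique return at the end, to first-return characterization -/
theorem ret_one_no_zero {k : ℕ} {σ : ℕ → ℕ} (hσ : isNM k σ) (hk : 1 ≤ k)
    (h1 : nret k σ = 1) : ∀ j, 0 < j → j < k → σ j ≠ 0 := by
  have hmem : k - 1 ∈ (Finset.range k).filter fun i => σ (i+1) = 0 := by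
    refine Finset.mem_filter.mpr ⟨Finset.mem_range.mpr (by omega), ?_⟩
    rw [show k - 1 + 1 = k by omega]
    exact hσ.2.1
  have hsing := Finset.card_eq_one.mp h1
  obtain ⟨x, hx⟩ := hsing
  rw [hx, Finset.mem_singleton] at hmem
  intro j hj1 hj2 hc
  have : j - 1 ∈ (Finset.range k).filter fun i => σ (i+1) = 0 := by
    refine Finset.mem_filter.mpr ⟨Finset.mem_range.mpr (by omega), ?_⟩
    rw [show j - 1 + 1 = j by omega]
    exact hc
  rw [hx, Finset.mem_singleton] at this
  omega

theorem fr_glue {k : ℕ} {σ τ : ℕ → ℕ} (hσ : isNM k σ) (h1 : nret k σ = 1)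
    (hk1 : 1 ≤ k) : fr (glue k σ τ) = k := by
  classical
  have hgk : glue k σ τ k = 0 := by rw [glue, if_pos le_rfl]; exact hσ.2.1
  have hex : ∃ j, 0 < j ∧ glue k σ τ j = 0 := ⟨k, hk1, hgk⟩
  rw [fr, dif_pos hex]
  rw [Nat.find_eq_iff]
  refine ⟨⟨hk1, hgk⟩, ?_⟩
  intro m hm hc
  obtain ⟨hm1, hm2⟩ := hc
  have : glue k σ τ m = σ m := by rw [glue, if_pos (le_of_lt hm)]
  exact ret_one_no_zero hσ hk1 h1 m hm1 hm (this ▸ hm2)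

/-- truncation is a path -/
theorem isNM_tr {n : ℕ} {g : ℕ → ℕ} (hg : isNM n g) {k : ℕ} (hk : k ≤ n) (hgk : g k = 0) :
    isNM k (tr k g) := by
  refine ⟨?_, ?_, ?_, ?_⟩
  · rw [tr, if_pos (Nat.zero_le k)]; exact hg.1
  · rw [tr, if_pos le_rfl]; exact hgk
  · intro i hi; rw [tr, if_neg (by omega)]
  · intro i hi
    rw [tr, if_pos (by omega : i + 1 ≤ k), tr, if_pos (by omega : i ≤ k)]
    exact hg.2.2.2 i (by omega)

theorem isNM_sh {n k : ℕ} {g : ℕ → ℕ} (hg : isNM n g) (hk : k ≤ n) (hgk : g k = 0) :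
    isNM (n - k) (sh k (n-k) g) := by
  refine ⟨?_, ?_, ?_, ?_⟩
  · rw [sh, if_pos (Nat.zero_le _)]; simpa using hgk
  · rw [sh, if_pos le_rfl, show k + (n - k) = n by omega]; exact hg.2.1
  · intro i hi; rw [sh, if_neg (by omega)]
  · intro i hi
    rw [sh, if_pos (by omega : i + 1 ≤ n - k), sh, if_pos (by omega : i ≤ n - k)]
    rw [show k + (i + 1) = k + i + 1 by omega]
    exact hg.2.2.2 (k + i) (by omega)

/-- returns split along a cut point -/
theorem nret_split {n k : ℕ} (g : ℕ → ℕ) (hk : k ≤ n) :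
    nret n g = nret k (tr k g) + nret (n-k) (sh k (n-k) g) := by
  classical
  have e1 : nret k (tr k g) = ((Finset.range k).filter fun i => g (i+1) = 0).card := by
    rw [nret]
    congr 1
    apply Finset.filter_congr
    intro i hi
    rw [Finset.mem_range] at hi
    rw [tr, if_pos (by omega : i + 1 ≤ k)]
  have e2 : nret (n-k) (sh k (n-k) g)
      = ((Finset.Ico k n).filter fun i => g (i+1) = 0).card := by
    rw [nret]
    apply Finset.card_bij (fun i _ => k + i)
    · intro i hi
      simp only [Finset.mem_filter, Finset.mem_range] at hi
      simp only [Finset.mem_filter, Finset.mem_Ico]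
      refine ⟨⟨by omega, by omega⟩, ?_⟩
      have := hi.2
      rw [sh, if_pos (by omega : i + 1 ≤ n - k)] at this
      rw [show k + i + 1 = k + (i+1) by omega]
      exact this
    · intro i _ j _ h; omega
    · intro j hj
      simp only [Finset.mem_filter, Finset.mem_Ico] at hj
      refine ⟨j - k, ?_, ?_⟩
      · simp only [Finset.mem_filter, Finset.mem_range]
        refine ⟨by omega, ?_⟩
        rw [sh, if_pos (by omega : j - k + 1 ≤ n - k), show k + (j - k + 1) = j + 1 by omega]
        exact hj.2
      · omega
  have hu : Finset.range n = Finset.range k ∪ Finset.Ico k n := by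
    ext x
    simp only [Finset.mem_union, Finset.mem_range, Finset.mem_Ico]
    omega
  have hd : Disjoint (Finset.filter (fun i => g (i + 1) = 0) (Finset.range k))
      (Finset.filter (fun i => g (i + 1) = 0) (Finset.Ico k n)) := by
    apply Finset.disjoint_filter_filter
    rw [Finset.disjoint_left]
    intro x hx1 hx2
    rw [Finset.mem_range] at hx1
    rw [Finset.mem_Ico] at hx2
    omega
  rw [e1, e2, nret, hu, Finset.filter_union, Finset.card_union_of_disjoint hd]

theorem nret_tr_fr {n : ℕ} {g : ℕ → ℕ} (hg : isNM n g) (hn : 1 ≤ n) :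
    nret (fr g) (tr (fr g) g) = 1 := by
  obtain ⟨h1, h2, h3, h4⟩ := fr_spec hg hn
  rw [nret, Finset.card_eq_one]
  refine ⟨fr g - 1, ?_⟩
  ext i
  simp only [Finset.mem_filter, Finset.mem_range, Finset.mem_singleton]
  constructor
  · rintro ⟨hi1, hi2⟩
    rw [tr, if_pos (by omega : i + 1 ≤ fr g)] at hi2
    by_contra hc
    exact h4 (i+1) (by omega) (by omega) hi2
  · rintro rfl
    refine ⟨by omega, ?_⟩
    rw [tr, if_pos (by omega : fr g - 1 + 1 ≤ fr g), show fr g - 1 + 1 = fr g by omega]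
    exact h3

/-- value splits along a cut point -/
theorem nval_split (a l : ℕ → R) {n k : ℕ} (g : ℕ → ℕ) (hk : k ≤ n) :
    nval a l n g = nval a l k (tr k g) * nval a l (n-k) (sh k (n-k) g) := by
  have e1 : nval a l k (tr k g) = ∏ i ∈ Finset.range k,
      (if g (i+1) = g i + 1 then 1 else if g (i+1) = g i then a (g i) else l (g i)) := by
    rw [nval]
    apply Finset.prod_congr rfl
    intro i hi
    rw [Finset.mem_range] at hi
    rw [tr, tr, if_pos (by omega : i + 1 ≤ k), if_pos (by omega : i ≤ k)]
  have e2 : nval a l (n-k) (sh k (n-k) g) = ∏ i ∈ Finset.range (n-k),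
      (if g (k+i+1) = g (k+i) + 1 then 1
        else if g (k+i+1) = g (k+i) then a (g (k+i)) else l (g (k+i))) := by
    rw [nval]
    apply Finset.prod_congr rfl
    intro i hi
    rw [Finset.mem_range] at hi
    rw [sh, sh, if_pos (by omega : i + 1 ≤ n - k), if_pos (by omega : i ≤ n - k),
      show k + (i+1) = k + i + 1 by omega]
  rw [e1, e2, nval, ← Finset.prod_range_add
    (fun i => (if g (i+1) = g i + 1 then 1 else if g (i+1) = g i then a (g i) else l (g i)))
    k (n-k), show k + (n - k) = n by omega]

theorem glue_tr_sh {n : ℕ} {g : ℕ → ℕ} (hg : isNM n g) {k : ℕ} (hk : k ≤ n) :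
    glue k (tr k g) (sh k (n-k) g) = g := by
  funext i
  rw [glue]
  by_cases h : i ≤ k
  · rw [if_pos h, tr, if_pos h]
  · rw [if_neg h, sh]
    by_cases h2 : i - k ≤ n - k
    · rw [if_pos h2]; congr 1; omega
    · rw [if_neg h2]
      exact (hg.2.2.1 i (by omega)).symm

theorem isNM_glue {n k : ℕ} {σ τ : ℕ → ℕ} (hσ : isNM k σ) (hτ : isNM (n-k) τ)
    (hk1 : 1 ≤ k) (hk : k ≤ n) : isNM n (glue k σ τ) := by
  have hστ : σ k = 0 ∧ τ 0 = 0 := ⟨hσ.2.1, hτ.1⟩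
  have hg : ∀ i, k ≤ i → glue k σ τ i = τ (i - k) := by
    intro i hi
    rw [glue]
    by_cases h : i ≤ k
    · rw [if_pos h, show i = k by omega]
      simp [hστ.1, hστ.2, show k - k = 0 by omega]
    · rw [if_neg h]
  refine ⟨?_, ?_, ?_, ?_⟩
  · rw [glue, if_pos (Nat.zero_le k)]; exact hσ.1
  · rw [hg n hk]; exact hτ.2.1
  · intro i hi
    rw [hg i (by omega)]
    exact hτ.2.2.1 (i - k) (by omega)
  · intro i hi
    by_cases h : i + 1 ≤ k
    · rw [glue, glue, if_pos h, if_pos (by omega)]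
      exact hσ.2.2.2 i (by omega)
    · by_cases h2 : k ≤ i
      · rw [hg (i+1) (by omega), hg i h2, show i + 1 - k = (i - k) + 1 by omega]
        exact hτ.2.2.2 (i - k) (by omega)
      · -- i < k < i + 1 impossible
        omega

theorem nret_glue {n k : ℕ} {σ τ : ℕ → ℕ} (hσ : isNM k σ) (hτ : isNM (n-k) τ)
    (h1 : nret k σ = 1) (hk1 : 1 ≤ k) (hk : k ≤ n) :
    nret n (glue k σ τ) = 1 + nret (n-k) τ := by
  have htr : tr k (glue k σ τ) = σ := by
    funext i
    rw [tr, glue]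
    by_cases h : i ≤ k
    · rw [if_pos h, if_pos h]
    · rw [if_neg h, (hσ.2.2.1 i (by omega)).symm]
  have hsh : sh k (n-k) (glue k σ τ) = τ := by
    funext i
    rw [sh]
    by_cases h : i ≤ n - k
    · rw [if_pos h, glue]
      by_cases h2 : k + i ≤ k
      · rw [if_pos h2, show i = 0 by omega, show k + 0 = k by omega, hσ.2.1, hτ.1]
      · rw [if_neg h2]; congr 1; omega
    · rw [if_neg h, (hτ.2.2.1 i (by omega)).symm]
  rw [nret_split (glue k σ τ) hk, htr, hsh, h1]

theorem tr_glue {k : ℕ} {σ τ : ℕ → ℕ} (hσ : isNM k σ) :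
    tr k (glue k σ τ) = σ := by
  funext i
  rw [tr, glue]
  by_cases h : i ≤ k
  · rw [if_pos h, if_pos h]
  · rw [if_neg h, (hσ.2.2.1 i (by omega)).symm]

theorem sh_glue {n k : ℕ} {σ τ : ℕ → ℕ} (hσ : isNM k σ) (hτ : isNM (n-k) τ) :
    sh k (n-k) (glue k σ τ) = τ := by
  funext i
  rw [sh]
  by_cases h : i ≤ n - k
  · rw [if_pos h, glue]
    by_cases h2 : k + i ≤ k
    · rw [if_pos h2, show i = 0 by omega, show k + 0 = k by omega, hσ.2.1, hτ.1]
    · rw [if_neg h2]; congr 1; omega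
  · rw [if_neg h, (hτ.2.2.1 i (by omega)).symm]


theorem MSum_key (a l : ℕ → R) {n r : ℕ} (hn : 1 ≤ n) (hr : 1 ≤ r) :
    MSum a l n r = ∑ k ∈ Finset.Icc 1 n, MSum a l k 1 * MSum a l (n-k) (r-1) := by
  classical
  have hRHS : ∑ k ∈ Finset.Icc 1 n, MSum a l k 1 * MSum a l (n-k) (r-1)
      = ∑ x ∈ (Finset.Icc 1 n).sigma (fun k =>
          (((motzkinSet k).image pad).filter (fun g => nret k g = 1)) ×ˢ
          (((motzkinSet (n-k)).image pad).filter (fun g => nret (n-k) g = r - 1))),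
          nval a l x.1 x.2.1 * nval a l (n - x.1) x.2.2 := by
    rw [Finset.sum_sigma]
    apply Finset.sum_congr rfl
    intro k _
    rw [Finset.sum_product, MSum, MSum, Finset.sum_mul_sum]
  rw [hRHS, MSum]
  apply Finset.sum_bij'
    (i := fun g _ => (⟨fr g, (tr (fr g) g, sh (fr g) (n - fr g) g)⟩ :
      Σ _ : ℕ, (ℕ → ℕ) × (ℕ → ℕ)))
    (j := fun x _ => glue x.1 x.2.1 x.2.2)
  · -- hi : maps into T
    intro g hg
    rw [Finset.mem_filter, mem_NM_iff] at hg
    obtain ⟨hgm, hgr⟩ := hg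
    obtain ⟨hf1, hf2, hf3, hf4⟩ := fr_spec hgm hn
    rw [Finset.mem_sigma]
    dsimp only
    constructor
    · exact Finset.mem_Icc.mpr ⟨hf1, hf2⟩
    · rw [Finset.mem_product]
      constructor
      · rw [Finset.mem_filter, mem_NM_iff]
        exact ⟨isNM_tr hgm hf2 hf3, nret_tr_fr hgm hn⟩
      · rw [Finset.mem_filter, mem_NM_iff]
        refine ⟨isNM_sh hgm hf2 hf3, ?_⟩
        dsimp only
        have := nret_split g hf2
        rw [nret_tr_fr hgm hn] at this
        omega
  · -- hj : maps back
    rintro ⟨k, σ, τ⟩ hx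
    rw [Finset.mem_sigma, Finset.mem_product] at hx
    dsimp only at hx
    obtain ⟨hk, hσ, hτ⟩ := hx
    rw [Finset.mem_Icc] at hk
    rw [Finset.mem_filter, mem_NM_iff] at hσ hτ
    rw [Finset.mem_filter, mem_NM_iff]
    dsimp only
    constructor
    · exact isNM_glue hσ.1 hτ.1 hk.1 hk.2
    · rw [nret_glue hσ.1 hτ.1 hσ.2 hk.1 hk.2, hτ.2]
      omega
  · -- left_inv
    intro g hg
    rw [Finset.mem_filter, mem_NM_iff] at hg
    obtain ⟨hf1, hf2, hf3, hf4⟩ := fr_spec hg.1 hn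
    exact glue_tr_sh hg.1 hf2
  · -- right_inv
    rintro ⟨k, σ, τ⟩ hx
    rw [Finset.mem_sigma, Finset.mem_product] at hx
    dsimp only at hx
    obtain ⟨hk, hσ, hτ⟩ := hx
    rw [Finset.mem_Icc] at hk
    rw [Finset.mem_filter, mem_NM_iff] at hσ hτ
    have hfr : fr (glue k σ τ) = k := fr_glue hσ.1 hσ.2 hk.1
    dsimp only
    simp only [hfr]
    rw [tr_glue hσ.1, sh_glue hσ.1 hτ.1]
  · -- values
    intro g hg
    rw [Finset.mem_filter, mem_NM_iff] at hg
    obtain ⟨hf1, hf2, hf3, hf4⟩ := fr_spec hg.1 hn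
    exact nval_split a l g hf2


section PS

variable (a l : ℕ → R)

/-- generating function of primitive (one-return) Motzkin paths -/
noncomputable def HS : PowerSeries R := PowerSeries.mk fun k => MSum a l k 1

theorem coeff_HS (k : ℕ) : coeff k (HS a l) = MSum a l k 1 := by
  rw [HS, coeff_mk]

theorem coeff_HS_pow (r n : ℕ) : coeff n ((HS a l) ^ r) = MSum a l n r := by
  induction r generalizing n with
  | zero =>
    rw [pow_zero, coeff_one]
    rcases Nat.eq_zero_or_pos n with rfl | hn
    · rw [if_pos rfl, MSum_zero_zero]
    · rw [if_neg (by omega), MSum_zero_ret hn]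
  | succ r ih =>
    rw [pow_succ, mul_comm, coeff_mul]
    have : ∀ p ∈ Finset.HasAntidiagonal.antidiagonal n,
        coeff p.1 (HS a l) * coeff p.2 ((HS a l)^r) = MSum a l p.1 1 * MSum a l p.2 r := by
      intro p _
      rw [coeff_HS, ih]
    rw [Finset.sum_congr rfl this, Finset.Nat.sum_antidiagonal_eq_sum_range_succ_mk]
    rcases Nat.eq_zero_or_pos n with rfl | hn
    · rw [Finset.sum_range_one]
      rw [MSum_zero_of_pos a l (by omega), zero_mul,
        MSum_zero_of_pos a l (by omega : 1 ≤ r + 1)]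
    · rw [MSum_key a l hn (by omega : 1 ≤ r + 1)]
      have hins : Finset.range (n+1) = insert 0 (Finset.Icc 1 n) := by
        ext x
        simp only [Finset.mem_range, Finset.mem_insert, Finset.mem_Icc]
        omega
      rw [hins, Finset.sum_insert (by simp)]
      rw [MSum_zero_of_pos a l le_rfl, zero_mul, zero_add]
      simp only [Nat.add_sub_cancel]

theorem ret_le {n : ℕ} (f : Fin (n+1) → Fin (n+1)) : returnsToZero f ≤ n := by
  calc returnsToZero f ≤ (Finset.univ : Finset (Fin n)).card := Finset.card_filter_le _ _
  _ = n := by simp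

theorem mu_fiber (n : ℕ) :
    ∑ f ∈ motzkinSet n, motzkinVal a l f = ∑ r ∈ Finset.range (n+1), MSum a l n r := by
  rw [← Finset.sum_fiberwise_of_maps_to
    (g := fun f => returnsToZero f) (t := Finset.range (n+1))
    (fun f _ => Finset.mem_range.mpr (Nat.lt_succ_of_le (ret_le f)))
    (motzkinVal a l)]
  apply Finset.sum_congr rfl
  intro r _
  rw [MSum_eq_fin]

variable {M : PowerSeries R}
  (hM : M = PowerSeries.mk fun m => ∑ f ∈ motzkinSet m, motzkinVal a l f)

include hM

theorem coeff_M (n : ℕ) : coeff n M = ∑ r ∈ Finset.range (n+1), MSum a l n r := by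
  rw [hM, coeff_mk, mu_fiber]

theorem M_mul_one_sub_HS : M * (1 - HS a l) = 1 := by
  ext n
  rw [mul_sub, mul_one, map_sub, coeff_one]
  have hMH : coeff n (M * HS a l) = coeff n M - MSum a l n 0 := by
    rw [coeff_mul]
    have e1 : ∀ p ∈ Finset.HasAntidiagonal.antidiagonal n,
        coeff p.1 M * coeff p.2 (HS a l)
          = ∑ r ∈ Finset.range (n+1), coeff p.1 ((HS a l)^r) * coeff p.2 (HS a l) := by
      intro p hp
      rw [Finset.HasAntidiagonal.mem_antidiagonal] at hp
      rw [coeff_M a l hM, Finset.sum_mul]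
      have hsub : Finset.range (p.1 + 1) ⊆ Finset.range (n+1) :=
        Finset.range_subset_range.mpr (by omega)
      rw [← Finset.sum_subset hsub]
      · apply Finset.sum_congr rfl
        intro r _
        rw [coeff_HS_pow]
      · intro r _ hr
        rw [Finset.mem_range, not_lt] at hr
        rw [Finset.mem_range] at *
        rw [coeff_HS_pow, MSum_eq_zero_of_gt (by omega), zero_mul]
    rw [Finset.sum_congr rfl e1, Finset.sum_comm]
    have e2 : ∀ r ∈ Finset.range (n+1),
        ∑ p ∈ Finset.HasAntidiagonal.antidiagonal n, coeff p.1 ((HS a l)^r) * coeff p.2 (HS a l)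
          = MSum a l n (r+1) := by
      intro r _
      rw [← coeff_mul, ← pow_succ, coeff_HS_pow]
    rw [Finset.sum_congr rfl e2]
    have e3 : ∑ r ∈ Finset.range (n+2), MSum a l n r
        = (∑ r ∈ Finset.range (n+1), MSum a l n (r+1)) + MSum a l n 0 :=
      Finset.sum_range_succ' _ _
    have e4 : ∑ r ∈ Finset.range (n+2), MSum a l n r
        = (∑ r ∈ Finset.range (n+1), MSum a l n r) + MSum a l n (n+1) :=
      Finset.sum_range_succ _ _
    rw [MSum_eq_zero_of_gt (by omega), add_zero] at e4
    rw [← coeff_M a l hM] at e4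
    rw [← e4, e3]
    ring
  rw [hMH]
  rcases Nat.eq_zero_or_pos n with rfl | hn
  · rw [if_pos rfl, MSum_zero_zero]
    ring
  · rw [if_neg (by omega), MSum_zero_ret hn]
    ring

end PS


section Lagrange

variable [Algebra ℚ R]

theorem cancel_natCast {m : ℕ} (hm : m ≠ 0) {x y : R} (h : (m : R) * x = y) :
    x = algebraMap ℚ R (1/(m:ℚ)) * y := by
  have h1 : algebraMap ℚ R (1/(m:ℚ)) * ((m:R) * x) = x := by
    rw [← mul_assoc, ← map_natCast (algebraMap ℚ R) m, ← map_mul,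
      one_div, inv_mul_cancel₀ (by exact_mod_cast hm : (m:ℚ) ≠ 0), map_one, one_mul]
  rw [← h]
  exact h1.symm

variable (M H : PowerSeries R) (hMu : M * (1 - H) = 1)

include hMu

theorem dM_eq : (1 - H)^2 * d⁄dX R M = d⁄dX R H := by
  have h0 : d⁄dX R (M * (1 - H)) = 0 := by rw [hMu, Derivation.map_one_eq_zero]
  rw [Derivation.leibniz] at h0
  have h1 : d⁄dX R (1 - H) = - d⁄dX R H := by
    rw [map_sub, Derivation.map_one_eq_zero, zero_sub]
  rw [h1, smul_eq_mul, smul_eq_mul] at h0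
  -- h0 : M * (- dH) + (1 - H) * dM = 0
  have h2 : (1 - H) * d⁄dX R M = M * d⁄dX R H := by linear_combination h0
  calc (1 - H)^2 * d⁄dX R M = (1-H) * ((1-H) * d⁄dX R M) := by ring
  _ = (1-H) * (M * d⁄dX R H) := by rw [h2]
  _ = (M * (1-H)) * d⁄dX R H := by ring
  _ = d⁄dX R H := by rw [hMu, one_mul]

theorem coeff_E (j : ℕ) :
    coeff j ((1 - H)^(j+1) * (M + X * d⁄dX R M)) = if j = 0 then 1 else 0 := by
  have hone : (1 - H) * M = 1 := by rw [mul_comm]; exact hMu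
  cases j with
  | zero =>
    rw [if_pos rfl, pow_one, mul_add, map_add, hone, ← mul_assoc, mul_comm (1-H) X, mul_assoc]
    rw [coeff_one, if_pos rfl]
    have : coeff 0 (X * ((1 - H) * d⁄dX R M)) = 0 := by
      rw [coeff_zero_eq_constantCoeff, map_mul, constantCoeff_X, zero_mul]
    rw [this, add_zero]
  | succ j =>
    rw [if_neg (Nat.succ_ne_zero j)]
    have key : (1-H)^(j+1+1) * (M + X * d⁄dX R M)
        = (1-H)^(j+1) * ((1-H) * M) + X * ((1-H)^j * ((1-H)^2 * d⁄dX R M)) := by ring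
    rw [key, dM_eq M H hMu, hone, mul_one, map_add, coeff_succ_X_mul]
    have h1 : d⁄dX R (1 - H) = - d⁄dX R H := by
      rw [map_sub, Derivation.map_one_eq_zero, zero_sub]
    have hd : d⁄dX R ((1-H)^(j+1)) = -((j+1 : ℕ) • ((1-H)^j * d⁄dX R H)) := by
      rw [Derivation.leibniz_pow, Nat.add_sub_cancel, h1, smul_neg, smul_neg, smul_eq_mul]
    have hcoeff := congrArg (coeff j) hd
    rw [coeff_derivative, map_neg, map_nsmul, nsmul_eq_mul] at hcoeff
    have hsum : ((j+1 : ℕ) : R) * (coeff (j+1) ((1-H)^(j+1))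
        + coeff j ((1-H)^j * d⁄dX R H)) = 0 := by
      push_cast at hcoeff ⊢
      linear_combination hcoeff
    have := cancel_natCast (Nat.succ_ne_zero j) hsum
    rw [mul_zero] at this
    exact this

end Lagrange


section Lagrange2

variable [Algebra ℚ R] (M H : PowerSeries R) (hMu : M * (1 - H) = 1)

theorem coeff_XM_pow {i k : ℕ} (h : i < k) : coeff i ((X * M)^k) = 0 := by
  rw [mul_pow, coeff_X_pow_mul', if_neg (by omega)]

include hMu in
theorem coeff_C_eq (C : PowerSeries R)
    (hcomp : ∀ n : ℕ, coeff n M =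
      ∑ m ∈ Finset.range (n + 1), coeff m C * coeff n ((X * M) ^ m)) (m : ℕ) :
    coeff m C = coeff m ((1-H)^m * (M + X * d⁄dX R M)) := by
  symm
  have hstep : coeff m ((1-H)^m * (M + X * d⁄dX R M))
      = coeff m (M * ((1-H)^(m+1) * (M + X * d⁄dX R M))) := by
    congr 1
    calc (1-H)^m * (M + X * d⁄dX R M)
        = (M * (1-H)) * ((1-H)^m * (M + X * d⁄dX R M)) := by rw [hMu, one_mul]
    _ = M * ((1-H)^(m+1) * (M + X * d⁄dX R M)) := by ring
  rw [hstep, coeff_mul]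
  have e1 : ∀ p ∈ Finset.HasAntidiagonal.antidiagonal m,
      coeff p.1 M * coeff p.2 ((1-H)^(m+1) * (M + X * d⁄dX R M))
        = ∑ k ∈ Finset.range (m+1), coeff k C *
            (coeff p.1 ((X * M)^k) * coeff p.2 ((1-H)^(m+1) * (M + X * d⁄dX R M))) := by
    intro p hp
    rw [Finset.HasAntidiagonal.mem_antidiagonal] at hp
    rw [hcomp p.1, Finset.sum_mul]
    rw [← Finset.sum_subset (Finset.range_subset_range.mpr (by omega : p.1 + 1 ≤ m + 1))]
    · apply Finset.sum_congr rfl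
      intro k _
      ring
    · intro k _ hk
      rw [Finset.mem_range, not_lt] at hk
      rw [coeff_XM_pow M (by omega)]
      ring
  rw [Finset.sum_congr rfl e1, Finset.sum_comm]
  have e2 : ∀ k ∈ Finset.range (m+1),
      ∑ p ∈ Finset.HasAntidiagonal.antidiagonal m, coeff k C *
          (coeff p.1 ((X * M)^k) * coeff p.2 ((1-H)^(m+1) * (M + X * d⁄dX R M)))
        = coeff k C * (if k = m then 1 else 0) := by
    intro k hk
    rw [Finset.mem_range] at hk
    rw [← Finset.mul_sum, ← coeff_mul]
    congr 1
    have e3 : (X*M)^k * ((1-H)^(m+1) * (M + X * d⁄dX R M))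
        = X^k * ((1-H)^(m-k+1) * (M + X * d⁄dX R M)) := by
      have h4 : (1-H)^(m+1) = (1-H)^k * (1-H)^(m-k+1) := by
        rw [← pow_add]
        congr 1
        omega
      calc (X*M)^k * ((1-H)^(m+1) * (M + X * d⁄dX R M))
          = X^k * (M^k * (1-H)^k * ((1-H)^(m-k+1) * (M + X * d⁄dX R M))) := by
            rw [h4, mul_pow]; ring
      _ = X^k * ((M * (1-H))^k * ((1-H)^(m-k+1) * (M + X * d⁄dX R M))) := by
            rw [mul_pow]
      _ = X^k * ((1-H)^(m-k+1) * (M + X * d⁄dX R M)) := by rw [hMu, one_pow, one_mul]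
    rw [e3, coeff_X_pow_mul', if_pos (by omega : k ≤ m), coeff_E M H hMu (m-k)]
    by_cases hkm : k = m
    · rw [if_pos hkm, if_pos (by omega)]
    · rw [if_neg hkm, if_neg (by omega)]
  rw [Finset.sum_congr rfl e2,
    Finset.sum_congr rfl (fun k _ => by rw [mul_ite, mul_one, mul_zero]),
    Finset.sum_ite_eq' (Finset.range (m+1)) m (fun k => coeff k C),
    if_pos (Finset.self_mem_range_succ m)]

end Lagrange2


section Final

variable [Algebra ℚ R] (a l : ℕ → R)

theorem coeff_one_sub_HS_pow (N n : ℕ) :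
    coeff n ((1 - HS a l)^N)
      = ∑ s ∈ Finset.range (N+1), (-1:R)^s * (N.choose s : R) * MSum a l n s := by
  have hexp : (1 - HS a l)^N
      = ∑ s ∈ Finset.range (N+1), C ((-1:R)^s * (N.choose s : R)) * (HS a l)^s := by
    rw [sub_eq_add_neg, add_comm, add_pow]
    apply Finset.sum_congr rfl
    intro s _
    rw [one_pow, neg_pow, map_mul, map_pow, map_neg, map_one, map_natCast]
    ring
  rw [hexp, map_sum]
  apply Finset.sum_congr rfl
  intro s _
  rw [coeff_C_mul, coeff_HS_pow, mul_assoc, ← mul_assoc]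

theorem coeff_HS_pow_mul_dH (s n : ℕ) :
    coeff (n+1) ((HS a l)^s * d⁄dX R (HS a l))
      = algebraMap ℚ R (((n:ℚ)+2)/((s:ℚ)+1)) * MSum a l (n+2) (s+1) := by
  have hd : d⁄dX R ((HS a l)^(s+1)) = (s+1 : ℕ) • ((HS a l)^s * d⁄dX R (HS a l)) := by
    rw [Derivation.leibniz_pow, Nat.add_sub_cancel, smul_eq_mul]
  have hc := congrArg (coeff (n+1)) hd
  rw [coeff_derivative, coeff_HS_pow, map_nsmul, nsmul_eq_mul] at hc
  have h2 : ((s+1 : ℕ) : R) * coeff (n+1) ((HS a l)^s * d⁄dX R (HS a l))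
      = ((n+2 : ℕ) : R) * MSum a l (n+2) (s+1) := by
    push_cast at hc ⊢
    rw [show n + 1 + 1 = n + 2 from rfl] at hc
    linear_combination -hc
  have := cancel_natCast (Nat.succ_ne_zero s) h2
  have harg : (1/((Nat.succ s : ℚ))) * ((n+2 : ℕ) : ℚ) = ((n:ℚ)+2)/((s:ℚ)+1) := by
    push_cast
    ring
  rw [this, ← map_natCast (algebraMap ℚ R) (n+2), ← mul_assoc, ← map_mul, harg]

theorem rat_identity (q s : ℕ) :
    (-1:ℚ)^(s+1) * (((q+1).choose (s+1) : ℚ))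
      + (-1:ℚ)^s * ((q.choose s : ℚ)) * (((q:ℚ)+2)/((s:ℚ)+1))
      = (-1:ℚ)^s / ((q:ℚ)+1) * (((q+1).choose (s+1) : ℚ)) := by
  have hnat : ((q:ℚ)+1) * (q.choose s : ℚ) = (((q+1).choose (s+1) : ℚ)) * ((s:ℚ)+1) := by
    exact_mod_cast Nat.add_one_mul_choose_eq q s
  have h1 : ((s:ℚ)+1) ≠ 0 := by positivity
  have h2 : ((q:ℚ)+1) ≠ 0 := by positivity
  rw [pow_succ]
  field_simp
  linear_combination ((q:ℚ)+2) * hnat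


theorem coeff_C_final (M Cs : PowerSeries R)
    (hM : M = PowerSeries.mk fun m => ∑ f ∈ motzkinSet m, motzkinVal a l f)
    (hcomp : ∀ n : ℕ, coeff n M =
      ∑ m ∈ Finset.range (n + 1), coeff m Cs * coeff n ((X * M) ^ m))
    (q : ℕ) :
    coeff (q+2) Cs = ∑ r ∈ Finset.range (q+3),
      algebraMap ℚ R ((-1:ℚ)^(r-1) / ((q:ℚ)+1) * (((q+1).choose r : ℚ)))
        * MSum a l (q+2) r := by
  have hMu : M * (1 - HS a l) = 1 := M_mul_one_sub_HS a l hM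
  rw [coeff_C_eq M (HS a l) hMu Cs hcomp (q+2)]
  have hone : (1 - HS a l) * M = 1 := by rw [mul_comm]; exact hMu
  have key : (1-HS a l)^(q+2) * (M + X * d⁄dX R M)
      = (1-HS a l)^(q+1) * ((1-HS a l) * M)
        + X * ((1-HS a l)^q * ((1-HS a l)^2 * d⁄dX R M)) := by ring
  rw [key, dM_eq M (HS a l) hMu, hone, mul_one, map_add, coeff_succ_X_mul]
  have hexp2 : coeff (q+1) ((1-HS a l)^q * d⁄dX R (HS a l))
      = ∑ s ∈ Finset.range (q+1), (-1:R)^s * (q.choose s : R)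
          * (algebraMap ℚ R (((q:ℚ)+2)/((s:ℚ)+1)) * MSum a l (q+2) (s+1)) := by
    have hexp : (1 - HS a l)^q
        = ∑ s ∈ Finset.range (q+1), C ((-1:R)^s * (q.choose s : R)) * (HS a l)^s := by
      rw [sub_eq_add_neg, add_comm, add_pow]
      apply Finset.sum_congr rfl
      intro s _
      rw [one_pow, neg_pow, map_mul, map_pow, map_neg, map_one, map_natCast]
      ring
    rw [hexp, Finset.sum_mul, map_sum]
    apply Finset.sum_congr rfl
    intro s _
    rw [mul_assoc, coeff_C_mul, coeff_HS_pow_mul_dH a l s q]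
  rw [coeff_one_sub_HS_pow, hexp2]
  have L1 : (∑ s ∈ Finset.range (q+1+1), (-1:R)^s * ((q+1).choose s : R) * MSum a l (q+2) s)
      = ∑ s ∈ Finset.range (q+1),
          (-1:R)^(s+1) * ((q+1).choose (s+1) : R) * MSum a l (q+2) (s+1) := by
    rw [Finset.sum_range_succ', MSum_zero_ret (by omega : 1 ≤ q+2), mul_zero, add_zero]
  have R1 : (∑ r ∈ Finset.range (q+3),
        algebraMap ℚ R ((-1:ℚ)^(r-1) / ((q:ℚ)+1) * (((q+1).choose r : ℚ)))
          * MSum a l (q+2) r)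
      = ∑ s ∈ Finset.range (q+1),
          algebraMap ℚ R ((-1:ℚ)^(s+1-1) / ((q:ℚ)+1) * (((q+1).choose (s+1) : ℚ)))
            * MSum a l (q+2) (s+1) := by
    rw [show q+3 = (q+2)+1 from rfl, Finset.sum_range_succ,
      show ((q+1).choose (q+2) : ℚ) = 0 by exact_mod_cast Nat.choose_eq_zero_of_lt (by omega),
      mul_zero, map_zero, zero_mul, add_zero, Finset.sum_range_succ',
      MSum_zero_ret (by omega : 1 ≤ q+2), mul_zero, add_zero]
  rw [L1, R1, ← Finset.sum_add_distrib]
  apply Finset.sum_congr rfl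
  intro s _
  calc (-1:R)^(s+1) * (((q+1).choose (s+1) : ℕ) : R) * MSum a l (q+2) (s+1)
      + (-1:R)^s * ((q.choose s : ℕ) : R)
        * (algebraMap ℚ R (((q:ℚ)+2)/((s:ℚ)+1)) * MSum a l (q+2) (s+1))
      = algebraMap ℚ R ((-1:ℚ)^(s+1) * (((q+1).choose (s+1)):ℚ)
          + (-1:ℚ)^s * ((q.choose s):ℚ) * (((q:ℚ)+2)/((s:ℚ)+1)))
          * MSum a l (q+2) (s+1) := by
        rw [map_add, map_mul, map_mul, map_mul, map_pow, map_pow, map_neg, map_one,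
          map_natCast, map_natCast]
        ring
  _ = algebraMap ℚ R ((-1:ℚ)^(s+1-1) / ((q:ℚ)+1) * (((q+1).choose (s+1)):ℚ))
        * MSum a l (q+2) (s+1) := by
      rw [rat_identity q s, Nat.add_sub_cancel]

end Final
end MotzkinAux

/-- Main theorem: let `μ_n = ∑_{π ∈ M_n} v(π)` be the weighted Motzkin path sums,
and let the free cumulants `c_n` be defined by `C(zM(z)) = M(z)` (composition
expressed coefficient-wise, valid since `zM(z)` has zero constant term), where
`M(z) = 1 + ∑ μ_n z^n` and `C(z) = 1 + ∑ c_n z^n`. Then for `n ≥ 2`,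
`c_n = ∑_{π ∈ M_n} ((−1)^{|π|₀−1}/(n−1))·binom(n−1,|π|₀)·v(π)`. -/
theorem free_cumulants_eq_motzkin_sum
    {R : Type*} [CommRing R] [Algebra ℚ R] (a l : ℕ → R) (C : PowerSeries R)
    (M : PowerSeries R)
    (hM : M = PowerSeries.mk fun m => ∑ f ∈ motzkinSet m, motzkinVal a l f)
    (hC0 : constantCoeff C = 1)
    (hcomp : ∀ n : ℕ, coeff n M =
      ∑ m ∈ Finset.range (n + 1), coeff m C * coeff n ((X * M) ^ m)) :
    ∀ n : ℕ, 2 ≤ n →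
      coeff n C = ∑ f ∈ motzkinSet n,
        algebraMap ℚ R ((-1 : ℚ) ^ (returnsToZero f - 1) / (n - 1 : ℚ) *
            ((n - 1).choose (returnsToZero f) : ℚ)) * motzkinVal a l f := by
  intro n hn
  obtain ⟨q, rfl⟩ : ∃ q, n = q + 2 := ⟨n - 2, by omega⟩
  rw [MotzkinAux.coeff_C_final a l M C hM hcomp q]
  symm
  classical
  rw [← Finset.sum_fiberwise_of_maps_to
    (g := returnsToZero) (t := Finset.range (q+3))
    (fun f _ => Finset.mem_range.mpr (by have := MotzkinAux.ret_le f; omega))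
    (fun f => algebraMap ℚ R ((-1 : ℚ) ^ (returnsToZero f - 1) / ((q+2 : ℕ) - 1 : ℚ) *
            (((q+2 : ℕ) - 1).choose (returnsToZero f) : ℚ)) * motzkinVal a l f)]
  apply Finset.sum_congr rfl
  intro r hr
  rw [MotzkinAux.MSum_eq_fin, Finset.mul_sum]
  apply Finset.sum_congr rfl
  intro f hf
  rw [Finset.mem_filter] at hf
  rw [hf.2]
  congr 2
  · push_cast
    ring
end

section
/- Let (P_n) be a sequence of monic polynomials with deg P_n = n satisfying the three-term recurrence x·P_n(x) = P_{n+1}(x) + a_n P_n(x) + λ_n P_{n−1}(x) with λ_0 = 0, and let μ be the linear functional on polynomials with μ(P_0) = 1 and μ(P_n) = 0 for n ≥ 1. Then μ(P_m P_n) = 0 for m ≠ n and μ(P_n²) = λ_1 λ_2 ⋯ λ_n. -/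
open Polynomial

/-!
Multiplication by `X` is self-adjoint for the bilinear form `(p, q) ↦ μ (p * q)`, so expanding
`μ (X * P m * P n)` through the recurrence once in `m` and once in `n` relates the moments
`μ (P i * P j)`. By strong induction on `m ≤ n`, every term of that relation vanishes except
`λ_n μ (P (n - 1) * P m)`, which carries the product `λ_1 ⋯ λ_n` along the diagonal.
-/

namespace Polynomial

variable {R : Type*} [CommRing R]

theorem linearMap_apply_X_mul_mul_of_three_term {a lam : ℕ → R} {P : ℕ → R[X]}
    (hrec : ∀ n, X * P n = P (n + 1) + C (a n) * P n + C (lam n) * P (n - 1))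
    (μ : R[X] →ₗ[R] R) (i : ℕ) (q : R[X]) :
    μ (X * P i * q) =
      μ (P (i + 1) * q) + a i * μ (P i * q) + lam i * μ (P (i - 1) * q) := by
  simp only [hrec, add_mul, map_add, C_mul', smul_mul_assoc, map_smul, smul_eq_mul]

theorem linearMap_apply_mul_eq_ite_of_three_term {a lam : ℕ → R} {P : ℕ → R[X]}
    (hrec : ∀ n, X * P n = P (n + 1) + C (a n) * P n + C (lam n) * P (n - 1))
    (hlam0 : lam 0 = 0) (hP0 : P 0 = 1) (μ : R[X] →ₗ[R] R) (hμ0 : μ (P 0) = 1)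
    (hμ : ∀ n, 1 ≤ n → μ (P n) = 0) {m n : ℕ} (hmn : m ≤ n) :
    μ (P m * P n) = if n = m then ∏ k ∈ Finset.Icc 1 m, lam k else 0 := by
  induction m using Nat.strong_induction_on generalizing n with
  | _ m IH =>
  rcases m with _ | m
  · rcases Nat.eq_zero_or_pos n with rfl | hn
    · simpa [hP0] using hμ0
    · rw [hP0, one_mul, hμ n hn, if_neg (by omega)]
  have hvanish : ∀ j ≤ m, ∀ k, j < k → μ (P j * P k) = 0 := fun j hj k hjk ↦ by
    rw [IH j (by omega) hjk.le, if_neg hjk.ne']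
  have hlow : lam m * μ (P (m - 1) * P n) = 0 := by
    rcases m with _ | m
    · rw [hlam0, zero_mul]
    · rw [Nat.add_sub_cancel, hvanish m (by omega) n (by omega), mul_zero]
  have hshift : μ (P (m + 1) * P n) = lam n * μ (P m * P (n - 1)) := by
    have hsymm := linearMap_apply_X_mul_mul_of_three_term hrec μ m (P n)
    rw [mul_right_comm, linearMap_apply_X_mul_mul_of_three_term hrec μ n (P m),
      mul_comm (P (n + 1)), mul_comm (P n), mul_comm (P (n - 1))] at hsymm
    linear_combination (a n - a m) * hvanish m le_rfl n (by omega) - hsymm - hlow +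
      hvanish m le_rfl (n + 1) (by omega)
  rw [hshift, IH m (by omega) (by omega : m ≤ n - 1)]
  by_cases h : n = m + 1
  · subst h
    rw [if_pos rfl, if_pos (by omega), Finset.prod_Icc_succ_top (by omega), mul_comm]
  · rw [if_neg (by omega), if_neg h, mul_zero]

end Polynomial

/-- Orthogonality of polynomials from the three-term recurrence: if `(P_n)` are monic
of degree `n` with `x·P_n = P_{n+1} + a_n P_n + λ_n P_{n−1}` (`λ_0 = 0`, and for
`n = 0` the index `n - 1` is the truncated subtraction, harmless since `λ_0 = 0`),
and `μ` is the linear functional with `μ(P_0) = 1` and `μ(P_n) = 0` for `n ≥ 1`,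
then `μ(P_m P_n) = 0` for `m ≠ n` and `μ(P_n²) = λ_1 λ_2 ⋯ λ_n`. -/
theorem orthogonal_polynomials_three_term
    {R : Type*} [CommRing R] (a lam : ℕ → R) (hlam0 : lam 0 = 0)
    (P : ℕ → R[X]) (hmonic : ∀ n, (P n).Monic) (hdeg : ∀ n, (P n).natDegree = n)
    (hrec : ∀ n, X * P n = P (n + 1) + C (a n) * P n + C (lam n) * P (n - 1))
    (μ : R[X] →ₗ[R] R) (hμ0 : μ (P 0) = 1) (hμ : ∀ n, 1 ≤ n → μ (P n) = 0) :
    (∀ m n, m ≠ n → μ (P m * P n) = 0) ∧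
      (∀ n, μ (P n * P n) = ∏ k ∈ Finset.Icc 1 n, lam k) := by
  have hP0 : P 0 = 1 := (hmonic 0).natDegree_eq_zero.mp (hdeg 0)
  have hmoment {m n : ℕ} (hmn : m ≤ n) :=
    linearMap_apply_mul_eq_ite_of_three_term hrec hlam0 hP0 μ hμ0 hμ hmn
  refine ⟨fun m n hmn ↦ ?_, fun n ↦ by rw [hmoment le_rfl, if_pos rfl]⟩
  rcases lt_or_gt_of_ne hmn with h | h
  · rw [hmoment h.le, if_neg h.ne']
  · rw [mul_comm, hmoment h.le, if_neg h.ne']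
end

section
/- Let μ_n be the weighted Motzkin path sums with weights 1 (rise), a_y (horizontal at level y), λ_y (fall from level y), and Δ_n = det[μ_{i+j}]_{0≤i,j≤n} the Hankel determinant. Then Δ_n = λ_1^n λ_2^{n−1} ⋯ λ_{n−1}^2 λ_n, i.e., Δ_n = Π_{k=1}^{n} λ_k^{n+1−k}. -/
namespace HankelMotzkin

open Finset

variable {R : Type*} [CommRing R]

/-- The tridiagonal transfer matrix. -/
def T (a l : ℕ → R) (n : ℕ) : Matrix (Fin (n + 1)) (Fin (n + 1)) R :=
  Matrix.of fun y z =>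
    if (z : ℕ) = (y : ℕ) + 1 then 1
    else if (z : ℕ) = (y : ℕ) then a y
    else if (y : ℕ) = (z : ℕ) + 1 then l y
    else 0

lemma T_apply_far (a l : ℕ → R) {n : ℕ} (y z : Fin (n + 1))
    (h : ¬((z : ℕ) ≤ (y : ℕ) + 1 ∧ (y : ℕ) ≤ (z : ℕ) + 1)) : T a l n y z = 0 := by
  unfold T
  simp only [Matrix.of_apply]
  split_ifs with h1 h2 h3
  · omega
  · omega
  · omega
  · rfl

lemma T_apply_adj (a l : ℕ → R) {n : ℕ} (y z : Fin (n + 1))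
    (h1 : (z : ℕ) ≤ (y : ℕ) + 1) (h2 : (y : ℕ) ≤ (z : ℕ) + 1) :
    T a l n y z = if (z : ℕ) = (y : ℕ) + 1 then 1
      else if (z : ℕ) = (y : ℕ) then a y else l y := by
  unfold T
  simp only [Matrix.of_apply]
  split_ifs with h3 h4 h5
  · rfl
  · rfl
  · rfl
  · omega

/-- Walk-sum expansion of powers of the transfer matrix. -/
lemma pow_apply_walk (a l : ℕ → R) (n : ℕ) : ∀ (m : ℕ) (y z : Fin (n + 1)),
    (T a l n ^ m) y z =
      ∑ g ∈ Finset.univ.filter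
          (fun g : Fin (m + 1) → Fin (n + 1) => g 0 = y ∧ g (Fin.last m) = z),
        ∏ i : Fin m, T a l n (g i.castSucc) (g i.succ) := by
  intro m
  induction m with
  | zero =>
    intro y z
    rw [pow_zero]
    by_cases h : y = z
    · subst h
      rw [Matrix.one_apply_eq]
      have hset : (Finset.univ.filter
          (fun g : Fin 1 → Fin (n + 1) => g 0 = y ∧ g (Fin.last 0) = y)) = {fun _ => y} := by
        ext g
        simp only [mem_filter, mem_univ, true_and, mem_singleton]
        constructor
        · rintro ⟨h1, -⟩
          funext i
          rw [Subsingleton.elim i 0]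
          exact h1
        · rintro rfl
          exact ⟨rfl, rfl⟩
      rw [hset, Finset.sum_singleton]
      simp
    · rw [Matrix.one_apply_ne h]
      refine (Finset.sum_eq_zero ?_).symm
      intro g hg
      obtain ⟨-, h1, h2⟩ := Finset.mem_filter.mp hg
      exact absurd (h1.symm.trans (show g (Fin.last 0) = z from h2)) h
  | succ m ih =>
    intro y z
    rw [pow_succ, Matrix.mul_apply]
    have step1 : ∀ w : Fin (n + 1), (T a l n ^ m) y w * T a l n w z
        = ∑ g ∈ Finset.univ.filter
            (fun g : Fin (m + 1) → Fin (n + 1) => g 0 = y ∧ g (Fin.last m) = w),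
          (∏ i : Fin m, T a l n (g i.castSucc) (g i.succ)) * T a l n (g (Fin.last m)) z := by
      intro w
      rw [ih, Finset.sum_mul]
      refine Finset.sum_congr rfl fun g hg => ?_
      rw [(Finset.mem_filter.mp hg).2.2]
    simp only [step1]
    have hfilt : ∀ w : Fin (n + 1), (Finset.univ.filter
          (fun g : Fin (m + 1) → Fin (n + 1) => g 0 = y ∧ g (Fin.last m) = w))
        = (Finset.univ.filter (fun g : Fin (m + 1) → Fin (n + 1) => g 0 = y)).filter
            (fun g => g (Fin.last m) = w) := by
      intro w
      rw [Finset.filter_filter]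
    simp only [hfilt]
    rw [Finset.sum_fiberwise_of_maps_to (fun g _ => Finset.mem_univ (g (Fin.last m)))]
    -- now LHS is a sum over g' : Fin (m+1) → Fin (n+1) with g' 0 = y
    refine Finset.sum_nbij' (fun g => Fin.snoc g z) (fun g => Fin.init g) ?_ ?_ ?_ ?_ ?_
    · intro g hg
      simp only [mem_filter, mem_univ, true_and] at hg ⊢
      constructor
      · rw [show (0 : Fin (m + 2)) = Fin.castSucc 0 by simp, Fin.snoc_castSucc]
        exact hg
      · exact Fin.snoc_last _ _
    · intro g hg
      simp only [mem_filter, mem_univ, true_and] at hg ⊢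
      show g (Fin.castSucc 0) = y
      rw [Fin.castSucc_zero]
      exact hg.1
    · intro g _
      simp
    · intro g hg
      simp only [mem_filter, mem_univ, true_and] at hg
      rw [← hg.2]
      exact Fin.snoc_init_self g
    · intro g _
      rw [Fin.prod_univ_castSucc
        (f := fun i : Fin (m + 1) =>
          T a l n ((Fin.snoc g z : Fin (m + 2) → Fin (n + 1)) i.castSucc)
            ((Fin.snoc g z : Fin (m + 2) → Fin (n + 1)) i.succ))]
      congr 1
      · refine Finset.prod_congr rfl fun i _ => ?_
        rw [Fin.succ_castSucc, Fin.snoc_castSucc, Fin.snoc_castSucc]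
      · rw [Fin.succ_last, Fin.snoc_castSucc, Fin.snoc_last]

lemma height_le {N m : ℕ} (g : Fin (m + 1) → Fin (N + 1)) (h0 : g 0 = 0)
    (hadj : ∀ i : Fin m, (g i.succ : ℕ) ≤ (g i.castSucc : ℕ) + 1) :
    ∀ i : Fin (m + 1), (g i : ℕ) ≤ (i : ℕ) := by
  intro i
  induction i using Fin.induction with
  | zero => rw [h0]; simp
  | succ i ih =>
    have h1 := hadj i
    have h2 : ((i.castSucc : Fin (m + 1)) : ℕ) = (i : ℕ) := rfl
    have h3 : ((i.succ : Fin (m + 1)) : ℕ) = (i : ℕ) + 1 := rfl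
    omega

lemma height_le' {N m : ℕ} (g : Fin (m + 1) → Fin (N + 1)) (hl : g (Fin.last m) = 0)
    (hadj : ∀ i : Fin m, (g i.castSucc : ℕ) ≤ (g i.succ : ℕ) + 1) :
    ∀ i : Fin (m + 1), (g i : ℕ) + (i : ℕ) ≤ m := by
  intro i
  induction i using Fin.reverseInduction with
  | last => rw [hl]; simp
  | cast i ih =>
    have h1 := hadj i
    have h2 : ((i.castSucc : Fin (m + 1)) : ℕ) = (i : ℕ) := rfl
    have h3 : ((i.succ : Fin (m + 1)) : ℕ) = (i : ℕ) + 1 := rfl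
    have h4 : (i : ℕ) < m := i.isLt
    omega

/-- The Motzkin path sum equals a corner entry of the transfer matrix power. -/
lemma mu_eq (a l : ℕ → R) (n m : ℕ) (hm : m ≤ 2 * n) :
    ∑ f ∈ motzkinSet m, motzkinVal a l f = (T a l n ^ m) 0 0 := by
  rw [pow_apply_walk]
  -- restrict to adjacent walks
  rw [← Finset.sum_subset (s₁ := Finset.univ.filter
      (fun g : Fin (m + 1) → Fin (n + 1) => g 0 = 0 ∧ g (Fin.last m) = 0 ∧
        ∀ i : Fin m, (g i.succ : ℕ) ≤ (g i.castSucc : ℕ) + 1 ∧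
          (g i.castSucc : ℕ) ≤ (g i.succ : ℕ) + 1))
    (by
      intro g hg
      simp only [mem_filter, mem_univ, true_and] at hg ⊢
      exact ⟨hg.1, hg.2.1⟩)
    (by
      intro g hg hng
      simp only [mem_filter, mem_univ, true_and] at hg hng
      push_neg at hng
      obtain ⟨i, hi⟩ := hng hg.1 hg.2
      refine Finset.prod_eq_zero (Finset.mem_univ i) ?_
      exact T_apply_far a l _ _ (by omega))]
  -- bijection with motzkinSet
  refine Finset.sum_nbij'
    (fun f k => (⟨min (f k : ℕ) n, by omega⟩ : Fin (n + 1)))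
    (fun g k => (⟨min (g k : ℕ) m, by omega⟩ : Fin (m + 1)))
    ?_ ?_ ?_ ?_ ?_
  · intro f hf
    simp only [motzkinSet, mem_filter, mem_univ, true_and] at hf ⊢
    obtain ⟨h0, hl, hadj⟩ := hf
    refine ⟨by simp [h0, Fin.ext_iff], by simp [hl, Fin.ext_iff], fun i => ?_⟩
    have := hadj i
    omega
  · intro g hg
    simp only [motzkinSet, mem_filter, mem_univ, true_and] at hg ⊢
    obtain ⟨h0, hl, hadj⟩ := hg
    refine ⟨by simp [h0, Fin.ext_iff], by simp [hl, Fin.ext_iff], fun i => ?_⟩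
    have := hadj i
    omega
  · intro f hf
    simp only [motzkinSet, mem_filter, mem_univ, true_and] at hf
    obtain ⟨h0, hl, hadj⟩ := hf
    funext k
    have hb1 := height_le f h0 (fun i => (hadj i).1) k
    have hb2 := height_le' f hl (fun i => (hadj i).2) k
    simp only [Fin.ext_iff, Fin.val_mk]
    omega
  · intro g hg
    simp only [mem_filter, mem_univ, true_and] at hg
    obtain ⟨h0, hl, hadj⟩ := hg
    funext k
    have hb1 := height_le g h0 (fun i => (hadj i).1) k
    have hb2 := height_le' g hl (fun i => (hadj i).2) k
    have hk : (k : ℕ) ≤ m := by omega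
    simp only [Fin.ext_iff, Fin.val_mk]
    omega
  · intro f hf
    simp only [motzkinSet, mem_filter, mem_univ, true_and] at hf
    obtain ⟨h0, hl, hadj⟩ := hf
    have hb : ∀ k : Fin (m + 1), (f k : ℕ) ≤ n := by
      intro k
      have hb1 := height_le f h0 (fun i => (hadj i).1) k
      have hb2 := height_le' f hl (fun i => (hadj i).2) k
      omega
    unfold motzkinVal
    refine Finset.prod_congr rfl fun i _ => ?_
    have hc := hadj i
    rw [T_apply_adj a l _ _ (by simp only [Fin.val_mk]; omega) (by simp only [Fin.val_mk]; omega)]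
    simp only [Fin.val_mk]
    rw [Nat.min_eq_left (hb i.succ), Nat.min_eq_left (hb i.castSucc)]

/-- Band structure: entries above the band vanish. -/
lemma pow_band_upper (a l : ℕ → R) (n : ℕ) : ∀ (m : ℕ) (x y : Fin (n + 1)),
    (x : ℕ) + m < (y : ℕ) → (T a l n ^ m) x y = 0 := by
  intro m
  induction m with
  | zero =>
    intro x y h
    rw [pow_zero, Matrix.one_apply_ne (by intro he; subst he; omega)]
  | succ m ih =>
    intro x y h
    rw [pow_succ, Matrix.mul_apply]
    apply Finset.sum_eq_zero
    intro z _
    by_cases hz : (x : ℕ) + m < (z : ℕ)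
    · rw [ih x z hz, zero_mul]
    · rw [T_apply_far a l z y (by omega), mul_zero]

lemma pow_diag_upper (a l : ℕ → R) (n : ℕ) : ∀ (m : ℕ) (x y : Fin (n + 1)),
    (y : ℕ) = (x : ℕ) + m → (T a l n ^ m) x y = 1 := by
  intro m
  induction m with
  | zero =>
    intro x y h
    rw [pow_zero]
    rw [show y = x from Fin.ext (by omega), Matrix.one_apply_eq]
  | succ m ih =>
    intro x y h
    have hxm : (x : ℕ) + m ≤ n := by have := y.isLt; omega
    rw [pow_succ, Matrix.mul_apply]
    rw [Finset.sum_eq_single (⟨(x : ℕ) + m, by omega⟩ : Fin (n + 1))]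
    · rw [ih x _ (by simp), T_apply_adj a l _ _ (by simp; omega) (by simp; omega)]
      simp only [Fin.val_mk]
      rw [if_pos (by omega), one_mul]
    · intro b _ hb
      have hbv : (b : ℕ) ≠ (x : ℕ) + m := fun he => hb (Fin.ext (by simp [he]))
      by_cases hbig : (x : ℕ) + m < (b : ℕ)
      · rw [pow_band_upper a l n m x b hbig, zero_mul]
      · rw [T_apply_far a l b y (by omega), mul_zero]
    · intro hmem
      exact absurd (Finset.mem_univ _) hmem

lemma pow_band_lower (a l : ℕ → R) (n : ℕ) : ∀ (m : ℕ) (x y : Fin (n + 1)),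
    (y : ℕ) + m < (x : ℕ) → (T a l n ^ m) x y = 0 := by
  intro m
  induction m with
  | zero =>
    intro x y h
    rw [pow_zero, Matrix.one_apply_ne (by intro he; subst he; omega)]
  | succ m ih =>
    intro x y h
    rw [pow_succ', Matrix.mul_apply]
    apply Finset.sum_eq_zero
    intro z _
    by_cases hz : (y : ℕ) + m < (z : ℕ)
    · rw [ih z y hz, mul_zero]
    · rw [T_apply_far a l x z (by omega), zero_mul]

lemma pow_diag_lower (a l : ℕ → R) (n : ℕ) : ∀ (m : ℕ) (x y : Fin (n + 1)),
    (x : ℕ) = (y : ℕ) + m →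
    (T a l n ^ m) x y = ∏ k ∈ Finset.Icc ((y : ℕ) + 1) ((y : ℕ) + m), l k := by
  intro m
  induction m with
  | zero =>
    intro x y h
    rw [pow_zero, show x = y from Fin.ext (by omega), Matrix.one_apply_eq]
    rw [show Finset.Icc ((y : ℕ) + 1) ((y : ℕ) + 0) = ∅ from Finset.Icc_eq_empty (by omega)]
    rw [Finset.prod_empty]
  | succ m ih =>
    intro x y h
    have hym : (y : ℕ) + m ≤ n := by have := x.isLt; omega
    rw [pow_succ', Matrix.mul_apply]
    rw [Finset.sum_eq_single (⟨(y : ℕ) + m, by omega⟩ : Fin (n + 1))]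
    · rw [ih _ y (by simp), T_apply_adj a l _ _ (by simp; omega) (by simp; omega)]
      simp only [Fin.val_mk]
      rw [if_neg (by omega), if_neg (by omega)]
      have : Finset.Icc ((y : ℕ) + 1) ((y : ℕ) + (m + 1))
          = insert ((y : ℕ) + m + 1) (Finset.Icc ((y : ℕ) + 1) ((y : ℕ) + m)) := by
        rw [show (y : ℕ) + (m + 1) = ((y : ℕ) + m) + 1 by omega]
        exact (Finset.insert_Icc_right_eq_Icc_add_one (by omega)).symm
      rw [this, Finset.prod_insert (by simp)]
      rw [h]
      ring_nf
    · intro b _ hb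
      have hbv : (b : ℕ) ≠ (y : ℕ) + m := fun he => hb (Fin.ext (by simp [he]))
      by_cases hbig : (y : ℕ) + m < (b : ℕ)
      · rw [pow_band_lower a l n m b y hbig, mul_zero]
      · rw [T_apply_far a l x b (by omega), zero_mul]
    · intro hmem
      exact absurd (Finset.mem_univ _) hmem

lemma prod_prod (l : ℕ → R) : ∀ N : ℕ,
    ∏ j ∈ Finset.range (N + 1), ∏ k ∈ Finset.Icc 1 j, l k
      = ∏ k ∈ Finset.Icc 1 N, l k ^ (N + 1 - k) := by
  intro N
  induction N with
  | zero => simp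
  | succ N ih =>
    rw [Finset.prod_range_succ, ih]
    have hins : Finset.Icc 1 (N + 1) = insert (N + 1) (Finset.Icc 1 N) :=
      (Finset.insert_Icc_right_eq_Icc_add_one (by omega)).symm
    rw [hins, Finset.prod_insert (by simp), Finset.prod_insert (by simp)]
    have : ∏ k ∈ Finset.Icc 1 N, l k ^ (N + 1 + 1 - k)
        = ∏ k ∈ Finset.Icc 1 N, (l k ^ (N + 1 - k) * l k) := by
      refine Finset.prod_congr rfl fun k hk => ?_
      have hk' := (Finset.mem_Icc.mp hk).2
      rw [show N + 1 + 1 - k = (N + 1 - k) + 1 by omega, pow_succ]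
    rw [this, Finset.prod_mul_distrib]
    rw [show N + 1 + 1 - (N + 1) = 1 by omega, pow_one]
    ring

end HankelMotzkin

/-- The Hankel determinant of the weighted Motzkin path sums:
`Δ_n = det[μ_{i+j}]_{0≤i,j≤n} = ∏_{k=1}^n λ_k^{n+1−k}`. -/
theorem hankel_det_eq_prod_lambda
    {R : Type*} [CommRing R] (a l : ℕ → R) (n : ℕ) :
    Matrix.det (Matrix.of fun i j : Fin (n + 1) =>
        ∑ f ∈ motzkinSet ((i : ℕ) + (j : ℕ)), motzkinVal a l f) =
      ∏ k ∈ Finset.Icc 1 n, l k ^ (n + 1 - k) := by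
  open HankelMotzkin in
  have hM : (Matrix.of fun i j : Fin (n + 1) =>
        ∑ f ∈ motzkinSet ((i : ℕ) + (j : ℕ)), motzkinVal a l f)
      = (Matrix.of fun i y : Fin (n + 1) => (T a l n ^ (i : ℕ)) 0 y)
        * (Matrix.of fun y j : Fin (n + 1) => (T a l n ^ (j : ℕ)) y 0) := by
    ext i j
    rw [Matrix.mul_apply]
    simp only [Matrix.of_apply]
    have : ∑ y : Fin (n + 1), (T a l n ^ (i : ℕ)) 0 y * (T a l n ^ (j : ℕ)) y 0
        = (T a l n ^ (i : ℕ) * T a l n ^ (j : ℕ)) 0 0 := (Matrix.mul_apply).symm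
    rw [this, ← pow_add]
    exact HankelMotzkin.mu_eq a l n _ (by have := i.isLt; have := j.isLt; omega)
  rw [hM, Matrix.det_mul]
  have hA : Matrix.det (Matrix.of fun i y : Fin (n + 1) => (T a l n ^ (i : ℕ)) 0 y) = 1 := by
    rw [Matrix.det_of_lowerTriangular _ (by
      intro i j hij
      exact HankelMotzkin.pow_band_upper a l n _ _ _ (by simpa using hij))]
    rw [Finset.prod_eq_one]
    intro i _
    exact HankelMotzkin.pow_diag_upper a l n _ _ _ (by simp)
  have hB : Matrix.det (Matrix.of fun y j : Fin (n + 1) => (T a l n ^ (j : ℕ)) y 0)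
      = ∏ k ∈ Finset.Icc 1 n, l k ^ (n + 1 - k) := by
    rw [Matrix.det_of_upperTriangular (by
      intro i j hij
      exact HankelMotzkin.pow_band_lower a l n _ _ _ (by simpa using hij))]
    have : ∀ j : Fin (n + 1), (Matrix.of fun y j : Fin (n + 1) => (T a l n ^ (j : ℕ)) y 0) j j
        = ∏ k ∈ Finset.Icc 1 (j : ℕ), l k := by
      intro j
      simp only [Matrix.of_apply]
      have := HankelMotzkin.pow_diag_lower a l n (j : ℕ) j 0 (by simp)
      simpa using this
    rw [Finset.prod_congr rfl (fun j _ => this j)]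
    rw [Fin.prod_univ_eq_prod_range (fun j => ∏ k ∈ Finset.Icc 1 j, l k) (n + 1)]
    exact HankelMotzkin.prod_prod l n
  rw [hA, hB, one_mul]
end

section
/- (Lindström–Gessel–Viennot) Let Γ be a weighted directed acyclic graph with weight function v on edges taking values in a commutative ring, and let A_1, ..., A_n and B_1, ..., B_n be vertices such that for each pair (i,j) the set Ω_{ij} of paths from A_i to B_j is finite. Set a_{ij} = Σ_{ω ∈ Ω_{ij}} v(ω), where v(ω) is the product of edge weights. Then det[a_{ij}] = Σ sign(σ) v(ω_1) ⋯ v(ω_n), where the sum is over all permutations σ of {1,...,n} and all n-tuples of pairwise vertex-disjoint paths with ω_i a path from A_i to B_{σ(i)}. -/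
set_option linter.unusedSectionVars false


def pathVal {V R : Type*} [CommRing R] (w : V → V → R) (l : List V) : R :=
  ((l.zip l.tail).map fun p => w p.1 p.2).prod

section aux
set_option linter.unusedSectionVars false
variable {V R : Type*} [DecidableEq V] [CommRing R] (w : V → V → R)

@[simp] lemma pathVal_nil : pathVal w ([] : List V) = 1 := rfl
@[simp] lemma pathVal_single (a : V) : pathVal w [a] = 1 := rfl

lemma pathVal_cons_cons (a b : V) (t : List V) :
    pathVal w (a :: b :: t) = w a b * pathVal w (b :: t) := by
  simp [pathVal]

lemma pathVal_take_drop (l : List V) (k : ℕ) :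
    pathVal w l = pathVal w (l.take (k+1)) * pathVal w (l.drop k) := by
  induction l generalizing k with
  | nil => simp
  | cons a t ih =>
    cases k with
    | zero =>
      cases t with
      | nil => simp
      | cons b t' => simp
    | succ k =>
      cases t with
      | nil => simp
      | cons b t' =>
        rw [List.take_succ_cons, List.drop_succ_cons, pathVal_cons_cons]
        rw [ih k]
        have htk : (b :: t').take (k+1) = b :: t'.take k := List.take_succ_cons ..
        rw [htk]
        rw [pathVal_cons_cons w a b (t'.take k)]
        ring

lemma chain'_nodup {E : V → V → Prop}
    (hacyc : ∀ (x : V) (l : List V), l ≠ [] → List.Chain E x l → l.getLast? = some x → False) :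
    ∀ l : List V, l.Chain' E → l.Nodup := by
  intro l
  induction l with
  | nil => simp
  | cons a t ih =>
    intro hc
    have hc' : List.Chain E a t := hc
    refine List.nodup_cons.mpr ⟨?_, ih hc.tail⟩
    intro hmem
    obtain ⟨u, v, rfl⟩ := List.append_of_mem hmem
    have := (List.isChain_cons_split.mp hc').1
    exact hacyc a (u ++ [a]) (by simp) this List.getLast?_concat
end aux

section aux2
set_option linter.unusedSectionVars false
variable {V : Type*} [DecidableEq V]

lemma indexOf_lt_of_mem_take {x : V} : ∀ {l : List V} {k : ℕ}, x ∈ l.take k → l.idxOf x < k := by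
  intro l
  induction l with
  | nil => intro k h; simp at h
  | cons a t ih =>
    intro k h
    cases k with
    | zero => simp at h
    | succ k =>
      rw [List.take_succ_cons] at h
      rcases List.mem_cons.mp h with rfl | h'
      · simp [List.idxOf_cons_self]
      · by_cases hax : a = x
        · subst hax; simp [List.idxOf_cons_self]
        · rw [List.idxOf_cons_ne _ hax]
          exact Nat.succ_lt_succ (ih h')

lemma not_mem_take_indexOf (x : V) (l : List V) : x ∉ l.take (l.idxOf x) := by
  intro h
  exact lt_irrefl _ (indexOf_lt_of_mem_take h)

lemma indexOf_append_of_not_mem {x : V} : ∀ {s : List V} (t : List V), x ∉ s →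
    (s ++ t).idxOf x = s.length + t.idxOf x := by
  intro s
  induction s with
  | nil => simp
  | cons a s ih =>
    intro t h
    rw [List.mem_cons, not_or] at h
    rw [List.cons_append, List.idxOf_cons_ne _ (fun e => h.1 e.symm), ih t h.2]
    simp [Nat.succ_add]

lemma drop_indexOf {x : V} {l : List V} (h : x ∈ l) :
    l.drop (l.idxOf x) = x :: l.drop (l.idxOf x + 1) := by
  rw [List.drop_eq_getElem_cons (List.idxOf_lt_length_iff.mpr h), List.getElem_idxOf]

lemma take_indexOf_succ {x : V} {l : List V} (h : x ∈ l) :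
    l.take (l.idxOf x + 1) = l.take (l.idxOf x) ++ [x] := by
  rw [List.take_succ, List.getElem?_eq_getElem (List.idxOf_lt_length_iff.mpr h),
    List.getElem_idxOf]
  rfl

/-- splice of two paths at vertex `x`. -/
def splice (x : V) (l₁ l₂ : List V) : List V :=
  l₁.take (l₁.idxOf x) ++ l₂.drop (l₂.idxOf x)

lemma splice_eq_alt {x : V} {l₁ l₂ : List V} (h1 : x ∈ l₁) (h2 : x ∈ l₂) :
    splice x l₁ l₂ = l₁.take (l₁.idxOf x + 1) ++ l₂.drop (l₂.idxOf x + 1) := by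
  rw [splice, take_indexOf_succ h1, drop_indexOf h2]
  simp

lemma length_take_indexOf {x : V} {l : List V} (h : x ∈ l) :
    (l.take (l.idxOf x)).length = l.idxOf x := by
  rw [List.length_take]
  exact min_eq_left (le_of_lt (List.idxOf_lt_length_iff.mpr h))

lemma mem_splice_self (x : V) {l₁ l₂ : List V} (h2 : x ∈ l₂) : x ∈ splice x l₁ l₂ := by
  rw [splice, drop_indexOf h2]
  simp

lemma mem_of_mem_splice {x y : V} {l₁ l₂ : List V} (h : y ∈ splice x l₁ l₂) :
    y ∈ l₁ ∨ y ∈ l₂ := by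
  rcases List.mem_append.mp h with h | h
  · exact Or.inl (List.mem_of_mem_take h)
  · exact Or.inr (List.mem_of_mem_drop h)

lemma splice_head? {x : V} {l₁ l₂ : List V} (h1 : x ∈ l₁) (h2 : x ∈ l₂) :
    (splice x l₁ l₂).head? = l₁.head? := by
  rw [splice]
  cases hk : l₁.idxOf x with
  | zero =>
    have := drop_indexOf h1
    rw [hk] at this
    simp only [List.drop_zero] at this
    rw [this, drop_indexOf h2]
    simp
  | succ k =>
    cases l₁ with
    | nil => simp at h1
    | cons a t =>
      rw [List.take_succ_cons]
      simp

lemma splice_getLast? {x : V} {l₁ l₂ : List V} (h2 : x ∈ l₂) :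
    (splice x l₁ l₂).getLast? = l₂.getLast? := by
  have hd : l₂.drop (l₂.idxOf x) ≠ [] := by rw [drop_indexOf h2]; simp
  obtain ⟨y, hy⟩ := Option.isSome_iff_exists.mp (by rw [List.getLast?_isSome]; exact hd :
    (l₂.drop (l₂.idxOf x)).getLast?.isSome)
  rw [splice, List.getLast?_append, hy]
  conv_rhs => rw [← List.take_append_drop (l₂.idxOf x) l₂]
  rw [List.getLast?_append, hy]
  rfl

lemma splice_chain' {E : V → V → Prop} {x : V} {l₁ l₂ : List V}
    (hc1 : l₁.Chain' E) (hc2 : l₂.Chain' E) (h1 : x ∈ l₁) (h2 : x ∈ l₂) :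
    (splice x l₁ l₂).Chain' E := by
  rw [splice_eq_alt h1 h2, List.Chain', List.isChain_append]
  refine ⟨hc1.prefix (List.take_prefix _ _), hc2.suffix (List.drop_suffix _ _), ?_⟩
  intro a ha b hb
  rw [take_indexOf_succ h1, List.getLast?_concat] at ha
  rw [List.head?_drop] at hb
  have hb' : l₂.idxOf x + 1 < l₂.length := by
    by_contra hge
    rw [List.getElem?_eq_none (le_of_not_gt hge)] at hb
    exact Option.some_ne_none b (Option.mem_def.mp hb).symm
  rw [List.getElem?_eq_getElem hb'] at hb
  rw [Option.mem_def, Option.some_inj] at ha hb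
  subst ha; subst hb
  have := List.isChain_iff_getElem.mp hc2 (l₂.idxOf x) (by omega)
  simpa [List.get_eq_getElem, List.getElem_idxOf] using this
end aux2

section aux3
set_option linter.unusedSectionVars false
variable {V : Type*} [DecidableEq V]
lemma take_splice {x : V} {l₁ l₂ : List V} (h1 : x ∈ l₁) :
    (splice x l₁ l₂).take (l₁.idxOf x) = l₁.take (l₁.idxOf x) := by
  rw [splice, List.take_append, List.take_take, min_self,
    length_take_indexOf h1, Nat.sub_self, List.take_zero, List.append_nil]

lemma take_succ_splice {x : V} {l₁ l₂ : List V} (h1 : x ∈ l₁) (h2 : x ∈ l₂) :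
    (splice x l₁ l₂).take (l₁.idxOf x + 1) = l₁.take (l₁.idxOf x + 1) := by
  rw [splice, List.take_append, List.take_take,
    min_eq_right (Nat.le_succ _), length_take_indexOf h1]
  rw [Nat.succ_sub (le_refl _), Nat.sub_self, drop_indexOf h2, List.take_succ_cons,
    List.take_zero, take_indexOf_succ h1]

lemma drop_splice {x : V} {l₁ l₂ : List V} (h1 : x ∈ l₁) :
    (splice x l₁ l₂).drop (l₁.idxOf x) = l₂.drop (l₂.idxOf x) := by
  rw [splice, List.drop_left' (length_take_indexOf h1)]

lemma indexOf_splice {x : V} {l₁ l₂ : List V} (h1 : x ∈ l₁) (h2 : x ∈ l₂) :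
    (splice x l₁ l₂).idxOf x = l₁.idxOf x := by
  rw [splice, drop_indexOf h2, indexOf_append_of_not_mem _ (not_mem_take_indexOf x l₁),
    List.idxOf_cons_self, length_take_indexOf h1, Nat.add_zero]

lemma splice_splice {x : V} {l₁ l₂ : List V} (h1 : x ∈ l₁) (h2 : x ∈ l₂) :
    splice x (splice x l₁ l₂) (splice x l₂ l₁) = l₁ := by
  rw [splice, indexOf_splice h1 h2, indexOf_splice h2 h1, take_splice h1, drop_splice h2,
    List.take_append_drop]

lemma pathVal_splice {R : Type*} [CommRing R] (w : V → V → R) {x : V} {l₁ l₂ : List V}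
    (h1 : x ∈ l₁) (h2 : x ∈ l₂) :
    pathVal w (splice x l₁ l₂) =
      pathVal w (l₁.take (l₁.idxOf x + 1)) * pathVal w (l₂.drop (l₂.idxOf x)) := by
  rw [pathVal_take_drop w (splice x l₁ l₂) (l₁.idxOf x), take_succ_splice h1 h2,
    drop_splice h1]

lemma pathVal_splice_mul {R : Type*} [CommRing R] (w : V → V → R) {x : V} {l₁ l₂ : List V}
    (h1 : x ∈ l₁) (h2 : x ∈ l₂) :
    pathVal w (splice x l₁ l₂) * pathVal w (splice x l₂ l₁) =
      pathVal w l₁ * pathVal w l₂ := by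
  rw [pathVal_splice w h1 h2, pathVal_splice w h2 h1,
    pathVal_take_drop w l₁ (l₁.idxOf x), pathVal_take_drop w l₂ (l₂.idxOf x)]
  ring

lemma getElem?_splice {x : V} {l₁ l₂ : List V} (h1 : x ∈ l₁) {q : ℕ}
    (hq : q < l₁.idxOf x) :
    (splice x l₁ l₂)[q]? = l₁[q]? := by
  rw [splice, List.getElem?_append, if_pos (by rw [length_take_indexOf h1]; exact hq)]
  exact List.getElem?_take_of_lt hq
end aux3

section sel
open Finset
open scoped Classical
variable {V : Type*} [DecidableEq V] {n : ℕ}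


def Bad (ω : Fin n → List V) (i : Fin n) : Prop := ∃ j, j ≠ i ∧ ∃ x, x ∈ ω i ∧ x ∈ ω j

def Disj (ω : Fin n → List V) : Prop := ∀ i j : Fin n, i ≠ j → ∀ x ∈ ω i, x ∉ ω j

lemma bad_nonempty {ω : Fin n → List V} (h : ¬ Disj ω) :
    (univ.filter (Bad ω)).Nonempty := by
  rw [Disj] at h
  push_neg at h
  obtain ⟨i, j, hne, x, hx1, hx2⟩ := h
  exact ⟨i, mem_filter.mpr ⟨mem_univ _, ⟨j, Ne.symm hne, x, hx1, hx2⟩⟩⟩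

noncomputable def selI (ω : Fin n → List V) (h : ¬ Disj ω) : Fin n :=
  (univ.filter (Bad ω)).min' (bad_nonempty h)

lemma selI_bad {ω : Fin n → List V} (h : ¬ Disj ω) : Bad ω (selI ω h) :=
  (mem_filter.mp ((univ.filter (Bad ω)).min'_mem (bad_nonempty h))).2

lemma selI_min {ω : Fin n → List V} (h : ¬ Disj ω) {k : Fin n} (hk : Bad ω k) :
    selI ω h ≤ k :=
  Finset.min'_le _ _ (mem_filter.mpr ⟨mem_univ _, hk⟩)

noncomputable def pX (ω : Fin n → List V) (i : Fin n) : V → Bool :=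
  fun y => decide (∃ j, j ≠ i ∧ y ∈ ω j)

lemma selX_isSome {ω : Fin n → List V} (h : ¬ Disj ω) :
    ((ω (selI ω h)).find? (pX ω (selI ω h))).isSome := by
  rw [List.find?_isSome]
  obtain ⟨j, hj, x, hx1, hx2⟩ := selI_bad h
  exact ⟨x, hx1, by simp only [pX, decide_eq_true_eq]; exact ⟨j, hj, hx2⟩⟩

noncomputable def selX (ω : Fin n → List V) (h : ¬ Disj ω) : V :=
  ((ω (selI ω h)).find? (pX ω (selI ω h))).get (selX_isSome h)

lemma selX_find? {ω : Fin n → List V} (h : ¬ Disj ω) :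
    (ω (selI ω h)).find? (pX ω (selI ω h)) = some (selX ω h) :=
  (Option.some_get (selX_isSome h)).symm

lemma selX_spec {ω : Fin n → List V} (h : ¬ Disj ω) :
    ∃ j, j ≠ selI ω h ∧ selX ω h ∈ ω j := by
  have := List.find?_some (selX_find? h)
  simpa only [pX, decide_eq_true_eq] using this

lemma selX_mem {ω : Fin n → List V} (h : ¬ Disj ω) : selX ω h ∈ ω (selI ω h) :=
  List.mem_of_find?_eq_some (selX_find? h)

lemma decomp_take_drop {x : V} {l as bs : List V} (hl : l = as ++ x :: bs) (hx : x ∉ as) :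
    l.take (l.idxOf x) = as ∧ l.drop (l.idxOf x) = x :: bs := by
  subst hl
  have hidx : (as ++ x :: bs).idxOf x = as.length := by
    rw [indexOf_append_of_not_mem _ hx, List.idxOf_cons_self, Nat.add_zero]
  rw [hidx]
  exact ⟨List.take_left, List.drop_left⟩

lemma selX_take_min {ω : Fin n → List V} (h : ¬ Disj ω) :
    ∀ a ∈ (ω (selI ω h)).take ((ω (selI ω h)).idxOf (selX ω h)),
      ¬ ∃ j, j ≠ selI ω h ∧ a ∈ ω j := by
  obtain ⟨hp, as, bs, hdec, hmin⟩ := List.find?_eq_some_iff_append.mp (selX_find? h)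
  have hx : selX ω h ∉ as := by
    intro hmem
    have := hmin _ hmem
    rw [hp] at this
    simp at this
  rw [(decomp_take_drop hdec hx).1]
  intro a ha hex
  have := hmin a ha
  simp only [pX, Bool.not_eq_true', decide_eq_false_iff_not] at this
  exact this hex

lemma selJ_nonempty {ω : Fin n → List V} (h : ¬ Disj ω) :
    (univ.filter (fun j => j ≠ selI ω h ∧ selX ω h ∈ ω j)).Nonempty := by
  obtain ⟨j, hj, hmem⟩ := selX_spec h
  exact ⟨j, mem_filter.mpr ⟨mem_univ _, hj, hmem⟩⟩

noncomputable def selJ (ω : Fin n → List V) (h : ¬ Disj ω) : Fin n :=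
  (univ.filter (fun j => j ≠ selI ω h ∧ selX ω h ∈ ω j)).min' (selJ_nonempty h)

lemma selJ_spec {ω : Fin n → List V} (h : ¬ Disj ω) :
    selJ ω h ≠ selI ω h ∧ selX ω h ∈ ω (selJ ω h) :=
  (mem_filter.mp (Finset.min'_mem _ (selJ_nonempty h))).2

lemma selJ_min {ω : Fin n → List V} (h : ¬ Disj ω) {m : Fin n}
    (hm : m ≠ selI ω h) (hmem : selX ω h ∈ ω m) : selJ ω h ≤ m :=
  Finset.min'_le _ _ (mem_filter.mpr ⟨mem_univ _, hm, hmem⟩)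

lemma selI_lt_selJ {ω : Fin n → List V} (h : ¬ Disj ω) : selI ω h < selJ ω h := by
  have hle : selI ω h ≤ selJ ω h :=
    selI_min h ⟨selI ω h, Ne.symm (selJ_spec h).1,
      selX ω h, (selJ_spec h).2, selX_mem h⟩
  exact lt_of_le_of_ne hle (Ne.symm (selJ_spec h).1)
end sel
section swap
open Finset
open scoped Classical
variable {V : Type*} [DecidableEq V] {n : ℕ}

lemma take_drop_disjoint {l : List V} (hnd : l.Nodup) {k : ℕ} {a : V}
    (h1 : a ∈ l.take k) (h2 : a ∈ l.drop k) : False := by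
  rw [← List.take_append_drop k l] at hnd
  exact (List.nodup_append.mp hnd).2.2 _ h1 _ h2 rfl

noncomputable def lgvNext (ω : Fin n → List V) (h : ¬ Disj ω) : Fin n → List V :=
  Function.update
    (Function.update ω (selI ω h) (splice (selX ω h) (ω (selI ω h)) (ω (selJ ω h))))
    (selJ ω h) (splice (selX ω h) (ω (selJ ω h)) (ω (selI ω h)))

lemma lgvNext_selI {ω : Fin n → List V} (h : ¬ Disj ω) :
    lgvNext ω h (selI ω h) = splice (selX ω h) (ω (selI ω h)) (ω (selJ ω h)) := by
  rw [lgvNext, Function.update_of_ne (Ne.symm (selJ_spec h).1), Function.update_self]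

lemma lgvNext_selJ {ω : Fin n → List V} (h : ¬ Disj ω) :
    lgvNext ω h (selJ ω h) = splice (selX ω h) (ω (selJ ω h)) (ω (selI ω h)) := by
  rw [lgvNext, Function.update_self]

lemma lgvNext_other {ω : Fin n → List V} (h : ¬ Disj ω) {m : Fin n}
    (hmi : m ≠ selI ω h) (hmj : m ≠ selJ ω h) : lgvNext ω h m = ω m := by
  rw [lgvNext, Function.update_of_ne hmj, Function.update_of_ne hmi]

lemma lgvNext_not_disj {ω : Fin n → List V} (h : ¬ Disj ω) : ¬ Disj (lgvNext ω h) := by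
  intro hd
  exact hd (selI ω h) (selJ ω h) (Ne.symm (selJ_spec h).1)
    (selX ω h) (by rw [lgvNext_selI h]; exact mem_splice_self _ (selJ_spec h).2)
    (by rw [lgvNext_selJ h]; exact mem_splice_self _ (selX_mem h))

lemma selI_lgvNext {ω : Fin n → List V} (h : ¬ Disj ω) :
    selI (lgvNext ω h) (lgvNext_not_disj h) = selI ω h := by
  have hji : selJ ω h ≠ selI ω h := (selJ_spec h).1
  refine le_antisymm (selI_min _ ?_) ?_
  · exact ⟨selJ ω h, hji, selX ω h,
      (by rw [lgvNext_selI h]; exact mem_splice_self _ (selJ_spec h).2),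
      (by rw [lgvNext_selJ h]; exact mem_splice_self _ (selX_mem h))⟩
  · rcases eq_or_ne (selI (lgvNext ω h) (lgvNext_not_disj h)) (selI ω h) with heq | hki
    · exact le_of_eq heq.symm
    rcases eq_or_ne (selI (lgvNext ω h) (lgvNext_not_disj h)) (selJ ω h) with heq | hkj
    · rw [heq]; exact le_of_lt (selI_lt_selJ h)
    obtain ⟨m, hm, y, hyk, hym⟩ := selI_bad (lgvNext_not_disj h)
    rw [lgvNext_other h hki hkj] at hyk
    refine selI_min h ?_
    rcases eq_or_ne m (selI ω h) with rfl | hmi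
    · rw [lgvNext_selI h] at hym
      rcases mem_of_mem_splice hym with hy | hy
      · exact ⟨selI ω h, Ne.symm hki, y, hyk, hy⟩
      · exact ⟨selJ ω h, Ne.symm hkj, y, hyk, hy⟩
    rcases eq_or_ne m (selJ ω h) with rfl | hmj
    · rw [lgvNext_selJ h] at hym
      rcases mem_of_mem_splice hym with hy | hy
      · exact ⟨selJ ω h, Ne.symm hkj, y, hyk, hy⟩
      · exact ⟨selI ω h, Ne.symm hki, y, hyk, hy⟩
    · rw [lgvNext_other h hmi hmj] at hym
      exact ⟨m, hm, y, hyk, hym⟩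

lemma selX_lgvNext {ω : Fin n → List V} (h : ¬ Disj ω)
    (hnd : (ω (selI ω h)).Nodup) :
    selX (lgvNext ω h) (lgvNext_not_disj h) = selX ω h := by
  have hji : selJ ω h ≠ selI ω h := (selJ_spec h).1
  have hxi : selX ω h ∈ ω (selI ω h) := selX_mem h
  have hxj : selX ω h ∈ ω (selJ ω h) := (selJ_spec h).2
  have hfind : (lgvNext ω h (selI ω h)).find? (pX (lgvNext ω h) (selI ω h))
      = some (selX ω h) := by
    refine List.find?_eq_some_iff_append.mpr ⟨?_, (ω (selI ω h)).take ((ω (selI ω h)).idxOf (selX ω h)),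
      (ω (selJ ω h)).drop ((ω (selJ ω h)).idxOf (selX ω h) + 1), ?_, ?_⟩
    · simp only [pX, decide_eq_true_eq]
      exact ⟨selJ ω h, hji, by rw [lgvNext_selJ h]; exact mem_splice_self _ hxi⟩
    · rw [lgvNext_selI h, splice, drop_indexOf hxj]
    · intro a ha
      simp only [pX, Bool.not_eq_true', decide_eq_false_iff_not]
      rintro ⟨m, hmi, ham⟩
      rcases eq_or_ne m (selJ ω h) with rfl | hmj
      · rw [lgvNext_selJ h, splice] at ham
        rcases List.mem_append.mp ham with hy | hy
        · exact selX_take_min h a ha ⟨selJ ω h, hji, List.mem_of_mem_take hy⟩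
        · exact take_drop_disjoint hnd ha hy
      · rw [lgvNext_other h hmi hmj] at ham
        exact selX_take_min h a ha ⟨m, hmi, ham⟩
  have hfind' := selX_find? (lgvNext_not_disj h)
  rw [selI_lgvNext h] at hfind'
  rw [hfind] at hfind'
  exact (Option.some_inj.mp hfind').symm

lemma selJ_lgvNext {ω : Fin n → List V} (h : ¬ Disj ω)
    (hnd : (ω (selI ω h)).Nodup) :
    selJ (lgvNext ω h) (lgvNext_not_disj h) = selJ ω h := by
  have hji : selJ ω h ≠ selI ω h := (selJ_spec h).1
  refine le_antisymm ?_ ?_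
  · refine selJ_min (lgvNext_not_disj h) ?_ ?_
    · rw [selI_lgvNext h]; exact hji
    · rw [selX_lgvNext h hnd, lgvNext_selJ h]
      exact mem_splice_self _ (selX_mem h)
  · have hspec := selJ_spec (lgvNext_not_disj h)
    rw [selI_lgvNext h] at hspec
    rw [selX_lgvNext h hnd] at hspec
    rcases eq_or_ne (selJ (lgvNext ω h) (lgvNext_not_disj h)) (selJ ω h) with heq | hne
    · exact le_of_eq heq.symm
    · refine selJ_min h hspec.1 ?_
      rw [lgvNext_other h hspec.1 hne] at hspec
      exact hspec.2

lemma lgvNext_lgvNext {ω : Fin n → List V} (h : ¬ Disj ω)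
    (hnd : (ω (selI ω h)).Nodup) :
    lgvNext (lgvNext ω h) (lgvNext_not_disj h) = ω := by
  have hji : selJ ω h ≠ selI ω h := (selJ_spec h).1
  have hxi : selX ω h ∈ ω (selI ω h) := selX_mem h
  have hxj : selX ω h ∈ ω (selJ ω h) := (selJ_spec h).2
  funext m
  rcases eq_or_ne m (selI ω h) with rfl | hmi
  · have := lgvNext_selI (lgvNext_not_disj h)
    rw [selI_lgvNext h, selX_lgvNext h hnd, selJ_lgvNext h hnd] at this
    rw [this, lgvNext_selI h, lgvNext_selJ h, splice_splice hxi hxj]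
  rcases eq_or_ne m (selJ ω h) with rfl | hmj
  · have := lgvNext_selJ (lgvNext_not_disj h)
    rw [selI_lgvNext h, selX_lgvNext h hnd, selJ_lgvNext h hnd] at this
    rw [this, lgvNext_selI h, lgvNext_selJ h, splice_splice hxj hxi]
  · rw [lgvNext_other (lgvNext_not_disj h) (by rw [selI_lgvNext h]; exact hmi)
      (by rw [selJ_lgvNext h hnd]; exact hmj)]
    exact lgvNext_other h hmi hmj
end swap
section prodinv
open Finset
open scoped Classical
variable {V R : Type*} [DecidableEq V] [CommRing R] {n : ℕ}

lemma selI_lgvNext' {ω : Fin n → List V} (h : ¬ Disj ω) (h' : ¬ Disj (lgvNext ω h)) :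
    selI (lgvNext ω h) h' = selI ω h := selI_lgvNext h

lemma selX_lgvNext' {ω : Fin n → List V} (h : ¬ Disj ω) (hnd : (ω (selI ω h)).Nodup)
    (h' : ¬ Disj (lgvNext ω h)) : selX (lgvNext ω h) h' = selX ω h := selX_lgvNext h hnd

lemma selJ_lgvNext' {ω : Fin n → List V} (h : ¬ Disj ω) (hnd : (ω (selI ω h)).Nodup)
    (h' : ¬ Disj (lgvNext ω h)) : selJ (lgvNext ω h) h' = selJ ω h := selJ_lgvNext h hnd

lemma lgvNext_lgvNext' {ω : Fin n → List V} (h : ¬ Disj ω) (hnd : (ω (selI ω h)).Nodup)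
    (h' : ¬ Disj (lgvNext ω h)) : lgvNext (lgvNext ω h) h' = ω := lgvNext_lgvNext h hnd

lemma prod_pathVal_lgvNext (w : V → V → R) {ω : Fin n → List V} (h : ¬ Disj ω) :
    ∏ m, pathVal w (lgvNext ω h m) = ∏ m, pathVal w (ω m) := by
  have hji : selJ ω h ≠ selI ω h := (selJ_spec h).1
  have hmem : selJ ω h ∈ univ.erase (selI ω h) := mem_erase.mpr ⟨hji, mem_univ _⟩
  have split : ∀ f : Fin n → List V, ∏ m, pathVal w (f m) =
      pathVal w (f (selI ω h)) * (pathVal w (f (selJ ω h)) *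
        ∏ m ∈ (univ.erase (selI ω h)).erase (selJ ω h), pathVal w (f m)) := by
    intro f
    rw [← Finset.mul_prod_erase univ _ (mem_univ (selI ω h)),
      ← Finset.mul_prod_erase _ _ hmem]
  rw [split (lgvNext ω h), split ω, lgvNext_selI h, lgvNext_selJ h]
  have hrest : ∏ m ∈ (univ.erase (selI ω h)).erase (selJ ω h), pathVal w (lgvNext ω h m)
      = ∏ m ∈ (univ.erase (selI ω h)).erase (selJ ω h), pathVal w (ω m) := by
    refine Finset.prod_congr rfl fun m hm => ?_
    rw [lgvNext_other h (mem_erase.mp (mem_erase.mp hm).2).1 (mem_erase.mp hm).1]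
  rw [hrest, ← mul_assoc, ← mul_assoc,
    pathVal_splice_mul w (selX_mem h) (selJ_spec h).2]

lemma lgv_cancel (E : V → V → Prop) (w : V → V → R)
    (hacyc : ∀ (x : V) (l : List V), l ≠ [] → List.Chain E x l → l.getLast? = some x → False)
    (A B : Fin n → V) (Ω : Fin n → Fin n → Finset (List V))
    (hΩ : ∀ i j (l : List V), l ∈ Ω i j ↔
      l.head? = some (A i) ∧ l.getLast? = some (B j) ∧ l.Chain' E) :
    ∑ σ : Equiv.Perm (Fin n),
        ∑ ω ∈ (Fintype.piFinset fun i => Ω i (σ i)).filter (fun ω => ¬ Disj ω),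
          (Equiv.Perm.sign σ : ℤ) • ∏ i, pathVal w (ω i) = 0 := by
  rw [Finset.sum_sigma' (Finset.univ)
    (fun σ => (Fintype.piFinset fun i => Ω i (σ i)).filter (fun ω => ¬ Disj ω))
    (fun σ ω => (Equiv.Perm.sign σ : ℤ) • ∏ i, pathVal w (ω i))]
  set S := (Finset.univ : Finset (Equiv.Perm (Fin n))).sigma
    (fun σ => (Fintype.piFinset fun i => Ω i (σ i)).filter (fun ω => ¬ Disj ω)) with hS
  have hmem : ∀ a : (Σ _ : Equiv.Perm (Fin n), Fin n → List V), a ∈ S →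
      (¬ Disj a.2) ∧ ∀ m, a.2 m ∈ Ω m (a.1 m) := by
    intro a ha
    rw [hS, Finset.mem_sigma] at ha
    obtain ⟨-, ha⟩ := ha
    rw [Finset.mem_filter] at ha
    exact ⟨ha.2, fun m => (Fintype.mem_piFinset.mp ha.1) m⟩
  have hnd : ∀ a : (Σ _ : Equiv.Perm (Fin n), Fin n → List V), a ∈ S → ∀ m,
      (a.2 m).Nodup := fun a ha m =>
    chain'_nodup hacyc _ ((hΩ m (a.1 m) (a.2 m)).mp ((hmem a ha).2 m)).2.2
  refine Finset.sum_involution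
    (fun a ha => ⟨a.1 * Equiv.swap (selI a.2 (hmem a ha).1) (selJ a.2 (hmem a ha).1),
      lgvNext a.2 (hmem a ha).1⟩) ?_ ?_ ?_ ?_
  · -- sums to zero
    intro a ha
    obtain ⟨σ, ω⟩ := a
    have h := (hmem _ ha).1
    have hji : selJ ω h ≠ selI ω h := (selJ_spec h).1
    simp only
    rw [prod_pathVal_lgvNext w h, Equiv.Perm.sign_mul,
      Equiv.Perm.sign_swap (Ne.symm hji)]
    simp only [mul_neg_one, Units.val_neg, neg_smul]
    exact add_neg_cancel _
  · -- g a ≠ a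
    intro a ha _
    obtain ⟨σ, ω⟩ := a
    have h := (hmem _ ha).1
    intro heq
    have h1 := congrArg Sigma.fst heq
    simp only at h1
    have h2 : σ * Equiv.swap (selI ω h) (selJ ω h) = σ * 1 := by
      rw [mul_one]; exact h1
    exact (selJ_spec h).1 ((Equiv.swap_eq_one_iff.mp (mul_left_cancel h2)).symm)
  · -- g mem
    intro a ha
    obtain ⟨σ, ω⟩ := a
    have h := (hmem _ ha).1
    have hji : selJ ω h ≠ selI ω h := (selJ_spec h).1
    have hxi : selX ω h ∈ ω (selI ω h) := selX_mem h
    have hxj : selX ω h ∈ ω (selJ ω h) := (selJ_spec h).2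
    have hΩi := (hΩ _ _ _).mp ((hmem _ ha).2 (selI ω h))
    have hΩj := (hΩ _ _ _).mp ((hmem _ ha).2 (selJ ω h))
    show (⟨σ * Equiv.swap (selI ω h) (selJ ω h), lgvNext ω h⟩ :
      (Σ _ : Equiv.Perm (Fin n), Fin n → List V)) ∈ S
    refine Finset.mem_sigma.mpr ⟨Finset.mem_univ _,
      Finset.mem_filter.mpr ⟨Fintype.mem_piFinset.mpr ?_, lgvNext_not_disj h⟩⟩
    intro m
    show lgvNext ω h m ∈ Ω m ((σ * Equiv.swap (selI ω h) (selJ ω h)) m)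
    rcases eq_or_ne m (selI ω h) with rfl | hmi
    · rw [lgvNext_selI h]
      have : (σ * Equiv.swap (selI ω h) (selJ ω h)) (selI ω h) = σ (selJ ω h) := by
        simp [Equiv.Perm.mul_apply, Equiv.swap_apply_left]
      rw [this, hΩ]
      exact ⟨by rw [splice_head? hxi hxj]; exact hΩi.1,
        by rw [splice_getLast? hxj]; exact hΩj.2.1,
        splice_chain' hΩi.2.2 hΩj.2.2 hxi hxj⟩
    rcases eq_or_ne m (selJ ω h) with rfl | hmj
    · rw [lgvNext_selJ h]
      have : (σ * Equiv.swap (selI ω h) (selJ ω h)) (selJ ω h) = σ (selI ω h) := by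
        simp [Equiv.Perm.mul_apply, Equiv.swap_apply_right]
      rw [this, hΩ]
      exact ⟨by rw [splice_head? hxj hxi]; exact hΩj.1,
        by rw [splice_getLast? hxi]; exact hΩi.2.1,
        splice_chain' hΩj.2.2 hΩi.2.2 hxj hxi⟩
    · rw [lgvNext_other h hmi hmj]
      have : (σ * Equiv.swap (selI ω h) (selJ ω h)) m = σ m := by
        simp [Equiv.Perm.mul_apply, Equiv.swap_apply_of_ne_of_ne hmi hmj]
      rw [this]
      exact (hmem _ ha).2 m
  · -- involution
    intro a ha
    obtain ⟨σ, ω⟩ := a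
    have h := (hmem _ ha).1
    have hndI : (ω (selI ω h)).Nodup := hnd _ ha (selI ω h)
    simp only
    have h' : ¬ Disj (lgvNext ω h) := lgvNext_not_disj h
    refine Sigma.ext ?_ ?_
    · show σ * Equiv.swap (selI ω h) (selJ ω h) * _ = σ
      rw [selI_lgvNext' h, selJ_lgvNext' h hndI, mul_assoc, Equiv.swap_mul_self, mul_one]
    · show HEq (lgvNext (lgvNext ω h) _) ω
      rw [heq_eq_eq]
      exact lgvNext_lgvNext' h hndI _
end prodinv
/-- Lindström–Gessel–Viennot lemma.  `Γ` is a weighted directed acyclic graph on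
vertices `V` with edge relation `E` and weights `w` (vanishing off edges).
`A i` and `B j` are selected vertices, and `Ω i j` is the (finite, by hypothesis)
set of directed paths from `A i` to `B j`, a path being a nonempty list of vertices
forming a chain of edges.  With `a i j = ∑_{ω ∈ Ω i j} v(ω)`, the determinant
`det[a i j]` equals the signed sum over all permutations `σ` and all tuples of
pairwise vertex-disjoint paths `ω i : A i → B (σ i)` of `sign σ · ∏ v(ω i)`. -/
theorem lindstrom_gessel_viennot
    {V R : Type*} [DecidableEq V] [CommRing R]
    (E : V → V → Prop) (w : V → V → R)
    (hw : ∀ x y, ¬ E x y → w x y = 0)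
    (hacyc : ∀ (x : V) (l : List V), l ≠ [] → List.Chain E x l → l.getLast? = some x → False)
    (n : ℕ) (A B : Fin n → V)
    (Ω : Fin n → Fin n → Finset (List V))
    (hΩ : ∀ i j (l : List V), l ∈ Ω i j ↔
      l.head? = some (A i) ∧ l.getLast? = some (B j) ∧ l.Chain' E) :
    Matrix.det (Matrix.of fun i j : Fin n => ∑ l ∈ Ω i j, pathVal w l) =
      ∑ σ : Equiv.Perm (Fin n),
        ∑ ω ∈ (Fintype.piFinset fun i => Ω i (σ i)).filter
            (fun ω => ∀ i j : Fin n, i ≠ j → ∀ x ∈ ω i, x ∉ ω j),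
          (Equiv.Perm.sign σ : ℤ) • ∏ i, pathVal w (ω i) := by
  classical
  have hcancel := lgv_cancel E w hacyc A B Ω hΩ
  rw [← Matrix.det_transpose, Matrix.det_apply]
  have h1 : ∀ σ : Equiv.Perm (Fin n),
      (∏ i, (Matrix.of fun i j : Fin n => ∑ l ∈ Ω i j, pathVal w l).transpose (σ i) i)
        = ∑ ω ∈ Fintype.piFinset fun i => Ω i (σ i), ∏ i, pathVal w (ω i) := by
    intro σ
    rw [← Finset.prod_univ_sum (fun i => Ω i (σ i)) (fun _ l => pathVal w l)]
    rfl
  have step1 : ∑ σ : Equiv.Perm (Fin n),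
      Equiv.Perm.sign σ • ∏ i, (Matrix.of fun i j : Fin n => ∑ l ∈ Ω i j, pathVal w l).transpose (σ i) i
      = ∑ σ : Equiv.Perm (Fin n),
          ∑ ω ∈ Fintype.piFinset fun i => Ω i (σ i),
            (Equiv.Perm.sign σ : ℤ) • ∏ i, pathVal w (ω i) := by
    refine Finset.sum_congr rfl fun σ _ => ?_
    rw [h1 σ, Finset.smul_sum]
    exact Finset.sum_congr rfl fun ω _ => by rw [Units.smul_def]
  rw [step1]
  have step2 : ∀ σ : Equiv.Perm (Fin n),
      (∑ ω ∈ Fintype.piFinset fun i => Ω i (σ i),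
        (Equiv.Perm.sign σ : ℤ) • ∏ i, pathVal w (ω i))
      = (∑ ω ∈ (Fintype.piFinset fun i => Ω i (σ i)).filter
            (fun ω => ∀ i j : Fin n, i ≠ j → ∀ x ∈ ω i, x ∉ ω j),
          (Equiv.Perm.sign σ : ℤ) • ∏ i, pathVal w (ω i))
        + ∑ ω ∈ (Fintype.piFinset fun i => Ω i (σ i)).filter (fun ω => ¬ Disj ω),
            (Equiv.Perm.sign σ : ℤ) • ∏ i, pathVal w (ω i) := by
    intro σ
    rw [← Finset.sum_filter_add_sum_filter_not (Fintype.piFinset fun i => Ω i (σ i))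
      (fun ω => ∀ i j : Fin n, i ≠ j → ∀ x ∈ ω i, x ∉ ω j)]
    congr 1
    apply Finset.sum_congr _ (fun _ _ => rfl)
    ext ω
    simp [Finset.mem_filter, Disj, not_forall]
  calc ∑ σ : Equiv.Perm (Fin n),
          ∑ ω ∈ Fintype.piFinset fun i => Ω i (σ i),
            (Equiv.Perm.sign σ : ℤ) • ∏ i, pathVal w (ω i)
      = (∑ σ : Equiv.Perm (Fin n),
          ∑ ω ∈ (Fintype.piFinset fun i => Ω i (σ i)).filter
            (fun ω => ∀ i j : Fin n, i ≠ j → ∀ x ∈ ω i, x ∉ ω j),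
          (Equiv.Perm.sign σ : ℤ) • ∏ i, pathVal w (ω i))
        + ∑ σ : Equiv.Perm (Fin n),
            ∑ ω ∈ (Fintype.piFinset fun i => Ω i (σ i)).filter (fun ω => ¬ Disj ω),
              (Equiv.Perm.sign σ : ℤ) • ∏ i, pathVal w (ω i) := by
        rw [← Finset.sum_add_distrib]
        exact Finset.sum_congr rfl fun σ _ => step2 σ
    _ = ∑ σ : Equiv.Perm (Fin n),
          ∑ ω ∈ (Fintype.piFinset fun i => Ω i (σ i)).filter
            (fun ω => ∀ i j : Fin n, i ≠ j → ∀ x ∈ ω i, x ∉ ω j),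
          (Equiv.Perm.sign σ : ℤ) • ∏ i, pathVal w (ω i) := by
        rw [hcancel, add_zero]
end
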